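/- arXiv:0805.3073 — 5 statements merged into one kernel-verified Lean document; each statement's English description precedes it below -/
import Mathlib

section
/- In the quantile setup, the Fisher information matrix admits the representation g_{ij}(θ) = ∫_0^1 (∂μ_i(θ,α)/∂α)(∂μ_j(θ,α)/∂α) dα for all θ ∈ Ω and all indices i, j. -/
open MeasureTheory Set

/-- `f_t(x;θ) = ∂f/∂θ_t`. -/
noncomputable def fpar {p : ℕ} (f : ℝ → (Fin p → ℝ) → ℝ) (t : Fin p)
    (x : ℝ) (θ : Fin p → ℝ) : ℝ :=
  fderiv ℝ (fun θ' => f x θ') θ (Pi.single t 1)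

/-- `l_t(x;θ) = ∂ log f/∂θ_t`. -/
noncomputable def lpar {p : ℕ} (f : ℝ → (Fin p → ℝ) → ℝ) (t : Fin p)
    (x : ℝ) (θ : Fin p → ℝ) : ℝ :=
  fderiv ℝ (fun θ' => Real.log (f x θ')) θ (Pi.single t 1)

/-- `μ_t(θ,α) = ∫_{q(θ,α)}^∞ f_t(u;θ) du`. -/
noncomputable def mu {p : ℕ} (f : ℝ → (Fin p → ℝ) → ℝ)
    (q : (Fin p → ℝ) → ℝ → ℝ) (t : Fin p) (θ : Fin p → ℝ) (α : ℝ) : ℝ :=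
  ∫ u in Set.Ioi (q θ α), fpar f t u θ

/-- FTC for the tail integral: if `g` is continuous and integrable, then
`x ↦ ∫_{Ioi x} g` has derivative `-(g x)` at every `x`. -/
lemma hasDerivAt_tail (g : ℝ → ℝ) (hc : Continuous g) (hi : Integrable g) (x : ℝ) :
    HasDerivAt (fun y => ∫ u in Set.Ioi y, g u) (-(g x)) x := by
  have key : (fun y => ∫ u in Set.Ioi y, g u)
      = fun y => ((∫ u, g u) - ∫ u in Set.Iic (0:ℝ), g u) - ∫ u in (0:ℝ)..y, g u := by
    funext y
    have h1 : (∫ u in Set.Iic y, g u) + ∫ u in Set.Ioi y, g u = ∫ u, g u :=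
      intervalIntegral.integral_Iic_add_Ioi hi.integrableOn hi.integrableOn
    have h2 : (∫ u in Set.Iic y, g u) - ∫ u in Set.Iic (0:ℝ), g u = ∫ u in (0:ℝ)..y, g u :=
      intervalIntegral.integral_Iic_sub_Iic hi.integrableOn hi.integrableOn
    linarith
  have hd : HasDerivAt (fun y => ∫ u in (0:ℝ)..y, g u) (g x) x :=
    intervalIntegral.integral_hasDerivAt_right hi.intervalIntegrable
      hi.aestronglyMeasurable.stronglyMeasurableAtFilter hc.continuousAt
  rw [key]
  exact hd.const_sub _

/-- In the quantile setup, the Fisher information matrix admits the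
representation `g_{ij}(θ) = ∫₀¹ (∂μ_i/∂α)(∂μ_j/∂α) dα` for all `θ ∈ Ω` and all `i, j`. -/
theorem stmt_1 (p : ℕ) (Ω : Set (Fin p → ℝ)) (hΩ : IsOpen Ω)
    (f : ℝ → (Fin p → ℝ) → ℝ)
    (hf_smooth : ContDiff ℝ (⊤ : ℕ∞) fun z : ℝ × (Fin p → ℝ) => f z.1 z.2)
    (hf_pos : ∀ x : ℝ, ∀ θ ∈ Ω, 0 < f x θ)
    (hf_prob : ∀ θ ∈ Ω, ∫ x, f x θ = 1)
    (hf_int : ∀ θ ∈ Ω, Integrable fun x => f x θ)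
    (hfpar_int : ∀ t : Fin p, ∀ θ ∈ Ω, Integrable fun x => fpar f t x θ)
    (hFisher_fin : ∀ i j : Fin p, ∀ θ ∈ Ω,
      Integrable fun x => lpar f i x θ * lpar f j x θ * f x θ)
    (q : (Fin p → ℝ) → ℝ → ℝ)
    (hq : ∀ θ ∈ Ω, ∀ α ∈ Set.Ioo (0:ℝ) 1, ∫ u in Set.Ioi (q θ α), f u θ = α) :
    ∀ θ ∈ Ω, ∀ i j : Fin p,
      (∫ x, lpar f i x θ * lpar f j x θ * f x θ)
        = ∫ α in Set.Ioo (0:ℝ) 1,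
            deriv (fun a => mu f q i θ a) α * deriv (fun a => mu f q j θ a) α := by
  intro θ hθ i j
  set F : ℝ → ℝ := fun x => ∫ u in Set.Ioi x, f u θ with hFdef
  have hfθ_pos : ∀ x, 0 < f x θ := fun x => hf_pos x θ hθ
  have hfθ_int : Integrable fun x => f x θ := hf_int θ hθ
  have hfθ_cont : Continuous fun x => f x θ :=
    hf_smooth.continuous.comp (continuous_id.prodMk continuous_const)
  -- continuity of x ↦ fpar f t x θ
  have hfpar_cont : ∀ t : Fin p, Continuous fun x => fpar f t x θ := by
    intro t
    have h0 : ContDiff ℝ 0 fun x : ℝ => fderiv ℝ (fun θ' => f x θ') θ :=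
      hf_smooth.fderiv (contDiff_const (c := θ)) (by simp)
    exact (contDiff_zero.mp h0).clm_apply continuous_const
  -- F has derivative -(f x θ) everywhere
  have hF_deriv : ∀ x, HasDerivAt F (-(f x θ)) x := fun x =>
    hasDerivAt_tail _ hfθ_cont hfθ_int x
  have hF_anti : StrictAnti F := by
    apply strictAnti_of_deriv_neg
    intro x
    rw [(hF_deriv x).deriv]
    exact neg_neg_iff_pos.mpr (hfθ_pos x)
  have hF_inj : Function.Injective F := hF_anti.injective
  -- 0 < F x < 1 for all x
  have hF_nonneg : ∀ x, 0 ≤ F x := fun x =>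
    setIntegral_nonneg measurableSet_Ioi fun u _ => (hfθ_pos u).le
  have hF_mem : ∀ x, F x ∈ Set.Ioo (0:ℝ) 1 := by
    intro x
    constructor
    · exact lt_of_le_of_lt (hF_nonneg (x + 1)) (hF_anti (lt_add_one x))
    · have h1 : (∫ u in Set.Iic x, f u θ) + F x = 1 := by
        rw [hFdef]
        rw [intervalIntegral.integral_Iic_add_Ioi hfθ_int.integrableOn hfθ_int.integrableOn]
        exact hf_prob θ hθ
      have h2 : (0:ℝ) < ∫ u in Set.Iic x, f u θ := by
        have hs : (∫ u in Set.Ioc (x - 1) x, f u θ) ≤ ∫ u in Set.Iic x, f u θ := by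
          apply setIntegral_mono_set hfθ_int.integrableOn
          · exact Filter.Eventually.of_forall fun u => (hfθ_pos u).le
          · exact HasSubset.Subset.eventuallyLE Set.Ioc_subset_Iic_self
        have hpos : (0:ℝ) < ∫ u in (x - 1)..x, f u θ :=
          intervalIntegral.intervalIntegral_pos_of_pos hfθ_int.intervalIntegrable hfθ_pos (by linarith)
        rw [intervalIntegral.integral_of_le (by linarith : x - 1 ≤ x)] at hpos
        linarith
      linarith
  have hFq : ∀ α ∈ Set.Ioo (0:ℝ) 1, F (q θ α) = α := hq θ hθ
  have hqF : ∀ x, q θ (F x) = x := fun x => hF_inj (hFq (F x) (hF_mem x))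
  have himage : F '' Set.univ = Set.Ioo (0:ℝ) 1 := by
    rw [Set.image_univ]
    ext α
    constructor
    · rintro ⟨x, rfl⟩; exact hF_mem x
    · intro hα; exact ⟨q θ α, hFq α hα⟩
  -- continuity of q θ on (0,1)
  have hq_cont : ∀ α ∈ Set.Ioo (0:ℝ) 1, ContinuousAt (q θ) α := by
    intro α hα
    rw [Metric.continuousAt_iff]
    intro ε hε
    set x₀ := q θ α with hx₀def
    have hx₀ : F x₀ = α := hFq α hα
    have h1 : F (x₀ + ε) < α := hx₀ ▸ hF_anti (by linarith)
    have h2 : α < F (x₀ - ε) := hx₀ ▸ hF_anti (by linarith)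
    obtain ⟨hα0, hα1⟩ := hα
    refine ⟨min (min (α - F (x₀ + ε)) (F (x₀ - ε) - α)) (min α (1 - α)),
      lt_min (lt_min (by linarith) (by linarith)) (lt_min hα0 (by linarith)), ?_⟩
    intro β hβ
    rw [Real.dist_eq] at hβ
    have habs := abs_lt.mp (lt_of_lt_of_le hβ (min_le_right _ _))
    have habs' := abs_lt.mp (lt_of_lt_of_le hβ (min_le_left _ _))
    have hβmem : β ∈ Set.Ioo (0:ℝ) 1 := by
      constructor
      · have := lt_min hα0 (by linarith : (0:ℝ) < 1 - α)
        simp only [lt_min_iff] at habs ⊢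
        nlinarith [habs.1, min_le_left α (1 - α)]
      · nlinarith [habs.2, min_le_right α (1 - α)]
    have hFqβ : F (q θ β) = β := hFq β hβmem
    have hb1 : F (x₀ + ε) < β := by
      have := habs'.1
      have h := min_le_left (α - F (x₀ + ε)) (F (x₀ - ε) - α)
      linarith
    have hb2 : β < F (x₀ - ε) := by
      have := habs'.2
      have h := min_le_right (α - F (x₀ + ε)) (F (x₀ - ε) - α)
      linarith
    have hlt1 : q θ β < x₀ + ε := by
      by_contra h
      push_neg at h
      have := hF_anti.antitone h
      rw [hFqβ] at this
      linarith
    have hlt2 : x₀ - ε < q θ β := by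
      by_contra h
      push_neg at h
      have := hF_anti.antitone h
      rw [hFqβ] at this
      linarith
    rw [Real.dist_eq, abs_lt]
    constructor <;> linarith
  -- derivative of q θ on (0,1)
  have hq_deriv : ∀ α ∈ Set.Ioo (0:ℝ) 1, HasDerivAt (q θ) (-(f (q θ α) θ))⁻¹ α := by
    intro α hα
    refine HasDerivAt.of_local_left_inverse (hq_cont α hα) (hF_deriv (q θ α)) ?_ ?_
    · exact neg_ne_zero.mpr (hfθ_pos (q θ α)).ne'
    · exact Filter.eventually_of_mem (isOpen_Ioo.mem_nhds hα) hFq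
  -- lpar = fpar / f
  have hlpar : ∀ t : Fin p, ∀ x : ℝ, lpar f t x θ = (f x θ)⁻¹ * fpar f t x θ := by
    intro t x
    have h1 : DifferentiableAt ℝ (fun z : ℝ × (Fin p → ℝ) => f z.1 z.2) (x, θ) :=
      hf_smooth.differentiable (by simp) (x, θ)
    have h2 : DifferentiableAt ℝ (fun θ' : Fin p → ℝ => ((x, θ') : ℝ × (Fin p → ℝ))) θ :=
      (differentiableAt_const x).prodMk differentiableAt_id
    have hdx : DifferentiableAt ℝ (fun θ' => f x θ') θ := h1.comp θ h2
    have hlog : HasFDerivAt (fun θ' => Real.log (f x θ'))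
        ((f x θ)⁻¹ • fderiv ℝ (fun θ' => f x θ') θ) θ :=
      hdx.hasFDerivAt.log (hfθ_pos x).ne'
    unfold lpar fpar
    rw [hlog.fderiv]
    simp
  -- derivative of mu
  have hmu : ∀ t : Fin p, ∀ α ∈ Set.Ioo (0:ℝ) 1,
      HasDerivAt (fun a => mu f q t θ a) (lpar f t (q θ α) θ) α := by
    intro t α hα
    have hM : HasDerivAt (fun x => ∫ u in Set.Ioi x, fpar f t u θ)
        (-(fpar f t (q θ α) θ)) (q θ α) :=
      hasDerivAt_tail _ (hfpar_cont t) (hfpar_int t θ hθ) _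
    have h := hM.comp α (hq_deriv α hα)
    have h2 : HasDerivAt (fun a => mu f q t θ a)
        ((-(fpar f t (q θ α) θ)) * (-(f (q θ α) θ))⁻¹) α := h
    have hval : (-(fpar f t (q θ α) θ)) * (-(f (q θ α) θ))⁻¹ = lpar f t (q θ α) θ := by
      rw [hlpar t (q θ α)]
      field_simp
    rwa [hval] at h2
  -- change of variables
  set g : ℝ → ℝ := fun β => lpar f i (q θ β) θ * lpar f j (q θ β) θ with hgdef
  have hcov : ∫ β in F '' Set.univ, g β = ∫ x, |(-(f x θ))| • g (F x) := by
    have := integral_image_eq_integral_abs_deriv_smul MeasurableSet.univ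
      (fun x _ => (hF_deriv x).hasDerivWithinAt) hF_inj.injOn g
    rwa [Measure.restrict_univ] at this
  calc (∫ x, lpar f i x θ * lpar f j x θ * f x θ)
      = ∫ x, |(-(f x θ))| • g (F x) := by
        congr 1
        funext x
        rw [hgdef]
        simp only [hqF x, smul_eq_mul, abs_neg, abs_of_pos (hfθ_pos x)]
        ring
    _ = ∫ β in F '' Set.univ, g β := hcov.symm
    _ = ∫ β in Set.Ioo (0:ℝ) 1, g β := by rw [himage]
    _ = ∫ α in Set.Ioo (0:ℝ) 1,
          deriv (fun a => mu f q i θ a) α * deriv (fun a => mu f q j θ a) α := by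
        refine setIntegral_congr_fun measurableSet_Ioo fun α hα => ?_
        rw [hgdef]
        simp only [(hmu i α hα).deriv, (hmu j α hα).deriv]
end

section
/- (Theorem 3.1, analytic form.) Let Ω ⊆ ℝ^p be open, e ∈ Ω, and let φ : Ω × Ω → Ω, (θ,a) ↦ φ(θ,a), be a C² map with φ(θ,e) = θ for all θ ∈ Ω (in the application, φ(θ,a) = aθ is the group action of the transformation group on the parameter space). Define the p×p matrix Φ̃(θ) with entries Φ̃^r_s(θ) = ∂φ_r(θ,a)/∂a_s evaluated at a = e, assume Φ̃(θ) is invertible for every θ, and let π^H(θ) = |det Φ̃(θ)|^{−1} (the right Haar prior density). Suppose u : Ω × (0,1) → ℝ^p is C¹ in θ and equivariant in the sense that u^i(φ(θ,a),α) = u^s(θ,α) · ∂φ_i(θ,a)/∂θ_s (summation over s) for all θ, a ∈ Ω and all α ∈ (0,1). Then ∂_s{u^s(θ,α)π^H(θ)} = 0 (summation over s) for every θ ∈ Ω and every α ∈ (0,1); that is, the right Haar prior solves the uniformly predictive matching equation ∂_s{g^{st}μ_tπ} = 0 whenever the vector field u^s = g^{st}μ_t has this equivariance property. -/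
/-!
Differentiating the equivariance identity `u(φ(θ,a)) = u(θ) · ∂_θ φ(θ,a)` in `a` at `a = e` and
using the symmetry of the mixed second derivatives of `φ` gives the matrix identity `J Φ̃ = ∂_u Φ̃`,
where `J` is the Jacobian matrix of `u` and `∂_u` the derivative along the vector `u(θ)`.
Multiplying by `adj Φ̃` and taking traces, Jacobi's formula turns this into
`det Φ̃ · div u = ∂_u det Φ̃`, i.e. `div u = ∂_u log |det Φ̃|`. Hence
`div (u |det Φ̃|⁻¹) = |det Φ̃|⁻¹ (div u - ∂_u log |det Φ̃|) = 0`.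
-/

open Filter Topology

section LinearAlgebra

variable {ι : Type*} [Fintype ι] [DecidableEq ι]

theorem ContinuousLinearMap.apply_eq_sum_smul_single {𝕜 F : Type*} [NontriviallyNormedField 𝕜]
    [NormedAddCommGroup F] [NormedSpace 𝕜 F] (L : (ι → 𝕜) →L[𝕜] F) (v : ι → 𝕜) :
    L v = ∑ j, v j • L (Pi.single j 1) := by
  conv_lhs => rw [pi_eq_sum_univ' v, map_sum]
  simp only [map_smul]

theorem Matrix.sum_det_updateCol_eq_trace_adjugate_mul {R : Type*} [CommRing R]
    (A H : Matrix ι ι R) :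
    ∑ i, (A.updateCol i fun k => H k i).det = (A.adjugate * H).trace := by
  simp only [← cramer_apply, cramer_eq_adjugate_mulVec, trace, diag, mul_apply, mulVec,
    dotProduct]

theorem Matrix.det_mul_trace_eq_trace_adjugate_mul {R : Type*} [CommRing R]
    {A J D : Matrix ι ι R} (h : J * A = D) :
    A.det * J.trace = (A.adjugate * D).trace := by
  rw [← h, Matrix.trace_mul_comm, Matrix.mul_assoc, Matrix.mul_adjugate, Matrix.mul_smul,
    Matrix.mul_one, Matrix.trace_smul, smul_eq_mul]

theorem Matrix.det_updateCol_eq_sum_perm {R : Type*} [CommRing R] (A : Matrix ι ι R) (i : ι)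
    (b : ι → R) :
    (A.updateCol i b).det = ∑ σ : Equiv.Perm ι,
      (Equiv.Perm.sign σ : R) * ((∏ j ∈ Finset.univ.erase i, A (σ j) j) * b (σ i)) := by
  rw [Matrix.det_apply']
  refine Finset.sum_congr rfl fun σ _ => ?_
  rw [← Finset.prod_erase_mul _ _ (Finset.mem_univ i), Matrix.updateCol_self]
  congr 2
  exact Finset.prod_congr rfl fun j hj => Matrix.updateCol_ne (Finset.ne_of_mem_erase hj)

end LinearAlgebra

section Jacobi

variable {ι 𝕜 E : Type*} [Fintype ι] [DecidableEq ι] [NontriviallyNormedField 𝕜]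
  [NormedAddCommGroup E] [NormedSpace 𝕜 E]

theorem HasFDerivAt.det {M : E → Matrix ι ι 𝕜} {M' : Matrix ι ι (E →L[𝕜] 𝕜)} {x : E}
    (h : ∀ i j, HasFDerivAt (fun y => M y i j) (M' i j) x) :
    HasFDerivAt (fun y => (M y).det) (∑ i, ∑ j, (M x).adjugate j i • M' i j) x := by
  simp only [Matrix.det_apply']
  refine (HasFDerivAt.fun_sum fun σ _ =>
    (HasFDerivAt.finsetProd fun i _ => h (σ i) i).const_mul _).congr_fderiv ?_
  ext v
  have := Matrix.sum_det_updateCol_eq_trace_adjugate_mul (M x) (.of fun i j => M' i j v)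
  simp only [Matrix.det_updateCol_eq_sum_perm, Matrix.trace, Matrix.diag, Matrix.mul_apply] at this
  rw [Finset.sum_comm] at this
  simp only [sum_apply, smul_apply, smul_eq_mul, Matrix.of_apply, Finset.mul_sum] at this ⊢
  rw [this, Finset.sum_comm]

theorem fderiv_det_apply_eq_trace {M : E → Matrix ι ι 𝕜} {x : E}
    (hM : ∀ i j, DifferentiableAt 𝕜 (fun y => M y i j) x) (v : E) :
    fderiv 𝕜 (fun y => (M y).det) x v
      = ((M x).adjugate * Matrix.of fun i j => fderiv 𝕜 (fun y => M y i j) x v).trace := by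
  rw [(HasFDerivAt.det fun i j => (hM i j).hasFDerivAt).fderiv]
  simp only [sum_apply, smul_apply, smul_eq_mul, Matrix.trace, Matrix.diag, Matrix.mul_apply,
    Matrix.of_apply]
  exact Finset.sum_comm

end Jacobi

section PartialDerivatives

variable {𝕜 E F G : Type*} [NontriviallyNormedField 𝕜] [NormedAddCommGroup E] [NormedSpace 𝕜 E]
  [NormedAddCommGroup F] [NormedSpace 𝕜 F] [NormedAddCommGroup G] [NormedSpace 𝕜 G]
  {f : E × F → G} {x : E} {y : F}

theorem DifferentiableAt.fderiv_partial_fst (hf : DifferentiableAt 𝕜 f (x, y)) :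
    fderiv 𝕜 (fun a => f (a, y)) x = (fderiv 𝕜 f (x, y)).comp (.inl 𝕜 E F) :=
  (hf.hasFDerivAt.comp x (hasFDerivAt_prodMk_left x y)).fderiv

theorem DifferentiableAt.fderiv_partial_snd (hf : DifferentiableAt 𝕜 f (x, y)) :
    fderiv 𝕜 (fun b => f (x, b)) y = (fderiv 𝕜 f (x, y)).comp (.inr 𝕜 E F) :=
  (hf.hasFDerivAt.comp y (hasFDerivAt_prodMk_right x y)).fderiv

theorem ContDiffAt.hasFDerivAt_fderiv_partial_fst (hf : ContDiffAt 𝕜 2 f (x, y)) (v : E) :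
    HasFDerivAt (fun b => fderiv 𝕜 (fun a => f (a, b)) x v)
      ((ContinuousLinearMap.apply 𝕜 G (v, 0)).comp
        ((fderiv 𝕜 (fderiv 𝕜 f) (x, y)).comp (.inr 𝕜 E F))) y := by
  have hdiff : ∀ᶠ b in 𝓝 y, DifferentiableAt 𝕜 f (x, b) :=
    ((Continuous.prodMk_right x).tendsto y).eventually
      ((hf.eventually (by simp)).mono fun _ h => h.differentiableAt two_ne_zero)
  have hf' := ((hf.fderiv_right (m := 1) le_rfl).differentiableAt one_ne_zero).hasFDerivAt
  refine ((ContinuousLinearMap.apply 𝕜 G (v, 0)).hasFDerivAt.comp y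
    (hf'.comp y (hasFDerivAt_prodMk_right x y))).congr_of_eventuallyEq ?_
  filter_upwards [hdiff] with b hb
  simp [hb.fderiv_partial_fst]

theorem ContDiffAt.hasFDerivAt_fderiv_partial_snd (hf : ContDiffAt 𝕜 2 f (x, y)) (w : F) :
    HasFDerivAt (fun a => fderiv 𝕜 (fun b => f (a, b)) y w)
      ((ContinuousLinearMap.apply 𝕜 G (0, w)).comp
        ((fderiv 𝕜 (fderiv 𝕜 f) (x, y)).comp (.inl 𝕜 E F))) x := by
  have hdiff : ∀ᶠ a in 𝓝 x, DifferentiableAt 𝕜 f (a, y) :=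
    ((Continuous.prodMk_left y).tendsto x).eventually
      ((hf.eventually (by simp)).mono fun _ h => h.differentiableAt two_ne_zero)
  have hf' := ((hf.fderiv_right (m := 1) le_rfl).differentiableAt one_ne_zero).hasFDerivAt
  refine ((ContinuousLinearMap.apply 𝕜 G (0, w)).hasFDerivAt.comp x
    (hf'.comp x (hasFDerivAt_prodMk_left x y))).congr_of_eventuallyEq ?_
  filter_upwards [hdiff] with a ha
  simp [ha.fderiv_partial_snd]

theorem ContDiffAt.fderiv_partial_comm {n : WithTop ℕ∞} (hf : ContDiffAt 𝕜 n f (x, y))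
    (hn : minSmoothness 𝕜 2 ≤ n) (v : E) (w : F) :
    fderiv 𝕜 (fun b => fderiv 𝕜 (fun a => f (a, b)) x v) y w
      = fderiv 𝕜 (fun a => fderiv 𝕜 (fun b => f (a, b)) y w) x v := by
  have hf2 : ContDiffAt 𝕜 2 f (x, y) := hf.of_le (le_minSmoothness.trans hn)
  rw [(hf2.hasFDerivAt_fderiv_partial_fst v).fderiv, (hf2.hasFDerivAt_fderiv_partial_snd w).fderiv]
  exact hf.isSymmSndFDerivAt hn (0, w) (v, 0)

end PartialDerivatives

section Divergence

variable {ι : Type*} [Fintype ι] [DecidableEq ι]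

noncomputable def divergence (u : ι → (ι → ℝ) → ℝ) (x : ι → ℝ) : ℝ :=
  ∑ s, fderiv ℝ (u s) x (Pi.single s 1)

noncomputable def jacobianMatrix (u : ι → (ι → ℝ) → ℝ) (x : ι → ℝ) : Matrix ι ι ℝ :=
  .of fun i j => fderiv ℝ (u i) x (Pi.single j 1)

theorem divergence_mul {u : ι → (ι → ℝ) → ℝ} {π : (ι → ℝ) → ℝ} {x : ι → ℝ}
    (hu : ∀ s, DifferentiableAt ℝ (u s) x) (hπ : DifferentiableAt ℝ π x) :
    divergence (fun s y => u s y * π y) x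
      = π x * divergence u x + fderiv ℝ π x (fun s => u s x) := by
  simp only [divergence, fderiv_fun_mul (hu _) hπ, add_apply, smul_apply,
    smul_eq_mul, Finset.sum_add_distrib, Finset.mul_sum,
    (fderiv ℝ π x).apply_eq_sum_smul_single (fun s => u s x)]
  ring

theorem divergence_mul_abs_det_inv_eq_zero {u : ι → (ι → ℝ) → ℝ} {M : (ι → ℝ) → Matrix ι ι ℝ}
    {π : (ι → ℝ) → ℝ} {x : ι → ℝ}
    (hu : ∀ s, DifferentiableAt ℝ (u s) x) (hM : ∀ i j, DifferentiableAt ℝ (fun y => M y i j) x)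
    (hdet : (M x).det ≠ 0) (hπ : π =ᶠ[𝓝 x] fun y => |(M y).det|⁻¹)
    (hJ : jacobianMatrix u x * M x
      = .of fun i j => fderiv ℝ (fun y => M y i j) x (fun s => u s x)) :
    divergence (fun s y => u s y * π y) x = 0 := by
  set d := fun y => (M y).det
  have hd : HasFDerivAt d (fderiv ℝ d x) x :=
    (HasFDerivAt.det fun i j => (hM i j).hasFDerivAt).differentiableAt.hasFDerivAt
  have hdu : fderiv ℝ d x (fun s => u s x) = d x * divergence u x := by
    rw [fderiv_det_apply_eq_trace hM, ← Matrix.det_mul_trace_eq_trace_adjugate_mul hJ]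
    rfl
  have habs : |d x| ≠ 0 := abs_ne_zero.2 hdet
  have hπ' : HasFDerivAt π ((-(|d x| ^ 2)⁻¹ * SignType.sign (d x)) • fderiv ℝ d x) x := by
    refine (((hasFDerivAt_inv habs).comp x (hd.abs hdet)).congr_fderiv ?_).congr_of_eventuallyEq hπ
    ext v
    simp only [sq_abs, ContinuousLinearMap.comp_smulₛₗ, Real.ringHom_apply, smul_apply,
      ContinuousLinearMap.comp_apply, ContinuousLinearMap.toSpanSingleton_apply, smul_eq_mul, d]
    ring
  rw [divergence_mul hu hπ'.differentiableAt, hπ'.fderiv, hπ.eq_of_nhds, smul_apply, hdu,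
    smul_eq_mul]
  calc |d x|⁻¹ * divergence u x
        + -(|d x| ^ 2)⁻¹ * SignType.sign (d x) * (d x * divergence u x)
      = (|d x|⁻¹ - (|d x| ^ 2)⁻¹ * (SignType.sign (d x) * d x)) * divergence u x := by ring
    _ = 0 := by rw [sign_mul_self]; field_simp; ring

theorem jacobianMatrix_mul_eq_fderiv_of_equivariant {φ : (ι → ℝ) → (ι → ℝ) → (ι → ℝ)}
    {u : ι → (ι → ℝ) → ℝ} {θ e : ι → ℝ}
    (hφ : ContDiffAt ℝ 2 (fun z : (ι → ℝ) × (ι → ℝ) => φ z.1 z.2) (θ, e)) (hφe : φ θ e = θ)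
    (hu : ∀ i, DifferentiableAt ℝ (u i) θ)
    (hequiv : ∀ᶠ a in 𝓝 e, ∀ i,
      u i (φ θ a) = ∑ s, u s θ * fderiv ℝ (fun θ' => φ θ' a i) θ (Pi.single s 1)) :
    jacobianMatrix u θ * jacobianMatrix (fun r a => φ θ a r) e
      = Matrix.of fun i r =>
          fderiv ℝ (fun θ' => jacobianMatrix (fun r a => φ θ' a r) e i r) θ (fun s => u s θ) := by
  have hφi : ∀ i, ContDiffAt ℝ 2 (fun z : (ι → ℝ) × (ι → ℝ) => φ z.1 z.2 i) (θ, e) :=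
    contDiffAt_pi.1 hφ
  have hφθ : DifferentiableAt ℝ (φ θ) e :=
    (hφ.differentiableAt two_ne_zero).comp e (hasFDerivAt_prodMk_right θ e).differentiableAt
  ext i r
  calc (jacobianMatrix u θ * jacobianMatrix (fun r a => φ θ a r) e) i r
      = fderiv ℝ (u i) θ (fderiv ℝ (φ θ) e (Pi.single r 1)) := by
        rw [(fderiv ℝ (u i) θ).apply_eq_sum_smul_single]
        simp [jacobianMatrix, Matrix.mul_apply, fderiv_apply hφθ, mul_comm]
    _ = fderiv ℝ (fun a => u i (φ θ a)) e (Pi.single r 1) := by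
        rw [fderiv_fun_comp e (hφe.symm ▸ hu i) hφθ, hφe]; rfl
    _ = ∑ s, u s θ * fderiv ℝ (fun a => fderiv ℝ (fun θ' => φ θ' a i) θ (Pi.single s 1)) e
          (Pi.single r 1) := by
        rw [Filter.EventuallyEq.fderiv_eq (hequiv.mono fun a h => h i), fderiv_fun_sum fun s _ =>
          ((hφi i).hasFDerivAt_fderiv_partial_fst _).differentiableAt.const_mul _]
        simp [fderiv_const_mul ((hφi i).hasFDerivAt_fderiv_partial_fst _).differentiableAt]
    _ = _ := by
        simp only [(hφi i).fderiv_partial_comm (by simp), jacobianMatrix, Matrix.of_apply]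
        rw [ContinuousLinearMap.apply_eq_sum_smul_single _ (fun s => u s θ)]
        simp only [smul_eq_mul]

end Divergence

theorem stmt_9_general (p : ℕ) (Ω : Set (Fin p → ℝ)) (hΩ : IsOpen Ω)
    (e : Fin p → ℝ) (he : e ∈ Ω)
    (φ : (Fin p → ℝ) → (Fin p → ℝ) → (Fin p → ℝ))
    (hφC2 : ContDiffOn ℝ 2
      (fun z : (Fin p → ℝ) × (Fin p → ℝ) => φ z.1 z.2) (Ω ×ˢ Ω))
    (hφe : ∀ θ ∈ Ω, φ θ e = θ)
    (Φ : (Fin p → ℝ) → Matrix (Fin p) (Fin p) ℝ)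
    (hΦ : ∀ θ ∈ Ω, ∀ r s : Fin p,
      Φ θ r s = fderiv ℝ (fun a => φ θ a r) e (Pi.single s 1))
    (hΦinv : ∀ θ ∈ Ω, IsUnit (Φ θ).det)
    (πH : (Fin p → ℝ) → ℝ)
    (hπH : ∀ θ ∈ Ω, πH θ = |(Φ θ).det|⁻¹)
    (u : Fin p → (Fin p → ℝ) → ℝ → ℝ)
    (hu_C1 : ∀ s : Fin p, ∀ α ∈ Set.Ioo (0:ℝ) 1, ∀ θ ∈ Ω,
      DifferentiableAt ℝ (fun θ' => u s θ' α) θ)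
    (hequiv : ∀ θ ∈ Ω, ∀ a ∈ Ω, ∀ α ∈ Set.Ioo (0:ℝ) 1, ∀ i : Fin p,
      u i (φ θ a) α
        = ∑ s, u s θ α * fderiv ℝ (fun θ' => φ θ' a i) θ (Pi.single s 1)) :
    ∀ θ ∈ Ω, ∀ α ∈ Set.Ioo (0:ℝ) 1,
      ∑ s, fderiv ℝ (fun θ' => u s θ' α * πH θ') θ (Pi.single s 1) = 0 := by
  intro θ hθ α hα
  have hΦ_eq : ∀ θ ∈ Ω, Φ θ = jacobianMatrix (fun r a => φ θ a r) e :=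
    fun θ hθ => Matrix.ext (hΦ θ hθ)
  have hφθ : ContDiffAt ℝ 2 (fun z : (Fin p → ℝ) × (Fin p → ℝ) => φ z.1 z.2) (θ, e) :=
    hφC2.contDiffAt ((hΩ.prod hΩ).mem_nhds ⟨hθ, he⟩)
  refine divergence_mul_abs_det_inv_eq_zero (u := fun s θ' => u s θ' α)
    (M := fun θ' => jacobianMatrix (fun r a => φ θ' a r) e)
    (fun s => hu_C1 s α hα θ hθ)
    (fun i r => ((contDiffAt_pi.1 hφθ i).hasFDerivAt_fderiv_partial_snd _).differentiableAt)
    (hΦ_eq θ hθ ▸ (hΦinv θ hθ).ne_zero) ?_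
    (jacobianMatrix_mul_eq_fderiv_of_equivariant hφθ (hφe θ hθ) (fun s => hu_C1 s α hα θ hθ) ?_)
  · filter_upwards [hΩ.mem_nhds hθ] with θ' hθ'
    rw [hπH θ' hθ', hΦ_eq θ' hθ']
  · filter_upwards [hΩ.mem_nhds he] with a ha
    exact hequiv θ hθ a ha α hα

/-- **Theorem 3.1, analytic form.** Let `Ω ⊆ ℝ^p` be open, `e ∈ Ω`, and
`φ : Ω × Ω → Ω` a C² map with `φ(θ,e) = θ`.  Let `Φ̃(θ)` be the matrix with entries
`Φ̃^r_s(θ) = ∂φ_r(θ,a)/∂a_s` at `a = e`, assumed invertible, and let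
`π^H(θ) = |det Φ̃(θ)|⁻¹` (the right Haar prior density).  If `u : Ω × (0,1) → ℝ^p` is C¹
in `θ` and equivariant in the sense that
`u^i(φ(θ,a),α) = u^s(θ,α)·∂φ_i(θ,a)/∂θ_s` (summation over `s`),
then `∂_s{u^s(θ,α)π^H(θ)} = 0` for every `θ ∈ Ω` and every `α ∈ (0,1)`. -/
theorem stmt_9 (p : ℕ) (Ω : Set (Fin p → ℝ)) (hΩ : IsOpen Ω)
    (e : Fin p → ℝ) (he : e ∈ Ω)
    (φ : (Fin p → ℝ) → (Fin p → ℝ) → (Fin p → ℝ))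
    (hφC2 : ContDiffOn ℝ 2
      (fun z : (Fin p → ℝ) × (Fin p → ℝ) => φ z.1 z.2) (Ω ×ˢ Ω))
    (hφe : ∀ θ ∈ Ω, φ θ e = θ)
    (hφmaps : ∀ θ ∈ Ω, ∀ a ∈ Ω, φ θ a ∈ Ω)
    (Φ : (Fin p → ℝ) → Matrix (Fin p) (Fin p) ℝ)
    (hΦ : ∀ θ ∈ Ω, ∀ r s : Fin p,
      Φ θ r s = fderiv ℝ (fun a => φ θ a r) e (Pi.single s 1))
    (hΦinv : ∀ θ ∈ Ω, IsUnit (Φ θ).det)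
    (πH : (Fin p → ℝ) → ℝ)
    (hπH : ∀ θ ∈ Ω, πH θ = |(Φ θ).det|⁻¹)
    (u : Fin p → (Fin p → ℝ) → ℝ → ℝ)
    (hu_C1 : ∀ s : Fin p, ∀ α ∈ Set.Ioo (0:ℝ) 1, ∀ θ ∈ Ω,
      DifferentiableAt ℝ (fun θ' => u s θ' α) θ)
    (hequiv : ∀ θ ∈ Ω, ∀ a ∈ Ω, ∀ α ∈ Set.Ioo (0:ℝ) 1, ∀ i : Fin p,
      u i (φ θ a) α
        = ∑ s, u s θ α * fderiv ℝ (fun θ' => φ θ' a i) θ (Pi.single s 1)) :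
    ∀ θ ∈ Ω, ∀ α ∈ Set.Ioo (0:ℝ) 1,
      ∑ s, fderiv ℝ (fun θ' => u s θ' α * πH θ') θ (Pi.single s 1) = 0 :=
  stmt_9_general p Ω hΩ e he φ hφC2 hφe Φ hΦ hΦinv πH hπH u hu_C1 hequiv
end

section
/- (Theorem 4.1.) Let Ω ⊆ ℝ^p be open and connected, let g : Ω → ℝ^{p×p} be a C¹ field of symmetric positive-definite matrices with inverse entries g^{st} and entries g_{ij}, and let ξ : Ω × (0,1) → ℝ^p be smooth with ∫_0^1 (∂ξ_i/∂α)(∂ξ_j/∂α)dα finite and differentiation under the integral sign valid. Define b_{ij}(θ) = ∫_0^1 (∂ξ_i/∂α)(θ,α)(∂ξ_j/∂α)(θ,α)dα and assume b(θ) is nonsingular for every θ (equivalently, for each θ the functions α ↦ ξ_t(θ,α) are linearly independent), with inverse entries b^{ri}. If π : Ω → (0,∞) is C¹ and satisfies ∂_s{g^{st}(θ)ξ_t(θ,α)π(θ)} = 0 (summation over s, t) for every θ ∈ Ω and every α ∈ (0,1), then π is unique up to a positive multiplicative constant, and λ = log π satisfies, for every index j, ∂_jλ(θ) = −b^{ri}(θ)g_{ij}(θ)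 ∫_0^1 (∂ξ_r/∂α)(θ,α) · ∂_s{g^{st}(θ)(∂ξ_t/∂α)(θ,α)} dα. -/
open MeasureTheory Set

lemma aux_det_diff {p : ℕ} {M : (Fin p → ℝ) → Matrix (Fin p) (Fin p) ℝ} {x : Fin p → ℝ}
    (h : ∀ i j, DifferentiableAt ℝ (fun θ => M θ i j) x) :
    DifferentiableAt ℝ (fun θ => (M θ).det) x := by
  simp only [Matrix.det_apply']
  refine DifferentiableAt.fun_sum fun σ _ => DifferentiableAt.const_mul ?_ _
  exact (HasFDerivAt.finset_prod (fun i _ => (h (σ i) i).hasFDerivAt)).differentiableAt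

lemma aux_inv_diff {p : ℕ} {M : (Fin p → ℝ) → Matrix (Fin p) (Fin p) ℝ} {x : Fin p → ℝ}
    (h : ∀ i j, DifferentiableAt ℝ (fun θ => M θ i j) x) (hdet : (M x).det ≠ 0) (s t : Fin p) :
    DifferentiableAt ℝ (fun θ => (M θ)⁻¹ s t) x := by
  have hrw : (fun θ => (M θ)⁻¹ s t) = fun θ => ((M θ).det)⁻¹ * (M θ).adjugate s t := by
    funext θ
    rw [Matrix.inv_def, Ring.inverse_eq_inv', Matrix.smul_apply, smul_eq_mul]
  rw [hrw]
  have hadj : DifferentiableAt ℝ (fun θ => (M θ).adjugate s t) x := by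
    simp only [Matrix.adjugate_apply]
    apply aux_det_diff
    intro i j
    simp only [Matrix.updateRow_apply]
    by_cases hit : i = t
    · simp [hit]
    · simpa [hit] using h i j
  exact ((aux_det_diff h).inv hdet).mul hadj

lemma aux_clm_eq_zero {p : ℕ} (L : (Fin p → ℝ) →L[ℝ] ℝ)
    (h : ∀ s, L (Pi.single s 1) = 0) : L = 0 := by
  ext x
  have hx : x = ∑ s, (x s) • (Pi.single s (1:ℝ) : Fin p → ℝ) := by
    conv_lhs => rw [← Finset.univ_sum_single x]
    refine Finset.sum_congr rfl fun s _ => ?_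
    rw [← Pi.single_smul, smul_eq_mul, mul_one]
  rw [hx]
  simp [h]

lemma aux_const {p : ℕ} {f : (Fin p → ℝ) → ℝ} {Ω : Set (Fin p → ℝ)}
    (hΩ : IsOpen Ω) (hpc : IsPreconnected Ω)
    (hd : ∀ x ∈ Ω, DifferentiableAt ℝ f x)
    (h0 : ∀ x ∈ Ω, fderiv ℝ f x = 0) :
    ∀ x ∈ Ω, ∀ y ∈ Ω, f x = f y := by
  intro x hx y hy
  haveI : PreconnectedSpace Ω := Subtype.preconnectedSpace hpc
  have hlc : IsLocallyConstant (fun z : Ω => f z.1) := by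
    rw [IsLocallyConstant.iff_exists_open]
    rintro ⟨z, hz⟩
    obtain ⟨ε, hε, hball⟩ := Metric.isOpen_iff.1 hΩ z hz
    refine ⟨Subtype.val ⁻¹' Metric.ball z ε, IsOpen.preimage continuous_subtype_val Metric.isOpen_ball,
      by simpa using Metric.mem_ball_self (x := z) hε, ?_⟩
    rintro ⟨w, hw⟩ hwball
    refine (convex_ball z ε).is_const_of_fderivWithin_eq_zero
      (fun u hu => ((hd u (hball hu)).differentiableWithinAt)) (fun u hu => ?_) hwball
      (Metric.mem_ball_self hε)
    rw [fderivWithin_of_isOpen Metric.isOpen_ball hu]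
    exact h0 u (hball hu)
  exact hlc.apply_eq_of_isPreconnected isPreconnected_univ (x := ⟨x, hx⟩) (y := ⟨y, hy⟩)
    trivial trivial

lemma aux_key {p : ℕ} {Ω : Set (Fin p → ℝ)} (hΩ : IsOpen Ω)
    (g : (Fin p → ℝ) → Matrix (Fin p) (Fin p) ℝ)
    (hg_C1 : ∀ i j : Fin p, ContDiffOn ℝ 1 (fun θ => g θ i j) Ω)
    (hg_pd : ∀ θ ∈ Ω, (g θ).PosDef)
    (ξ : Fin p → (Fin p → ℝ) → ℝ → ℝ)
    (hξ_smooth : ∀ t : Fin p, ContDiffOn ℝ (⊤ : ℕ∞)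
      (fun z : (Fin p → ℝ) × ℝ => ξ t z.1 z.2) (Ω ×ˢ Set.Ioo (0:ℝ) 1))
    (hξ_fin : ∀ i j : Fin p, ∀ θ ∈ Ω, IntegrableOn
      (fun α => deriv (fun a => ξ i θ a) α * deriv (fun a => ξ j θ a) α)
      (Set.Ioo (0:ℝ) 1))
    (b : (Fin p → ℝ) → Matrix (Fin p) (Fin p) ℝ)
    (hb_def : ∀ θ ∈ Ω, ∀ i j : Fin p, b θ i j
      = ∫ α in Set.Ioo (0:ℝ) 1,
          deriv (fun a => ξ i θ a) α * deriv (fun a => ξ j θ a) α)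
    (hb_inv : ∀ θ ∈ Ω, IsUnit (b θ).det)
    (π : (Fin p → ℝ) → ℝ) (hπC1 : ContDiffOn ℝ 1 π Ω) (hπpos : ∀ θ ∈ Ω, 0 < π θ)
    (hUPMP : ∀ θ ∈ Ω, ∀ α ∈ Set.Ioo (0:ℝ) 1,
      ∑ s, fderiv ℝ (fun θ' => ∑ t, (g θ')⁻¹ s t * ξ t θ' α * π θ')
        θ (Pi.single s 1) = 0) :
    ∀ j : Fin p, ∀ θ ∈ Ω,
      fderiv ℝ (fun θ' => Real.log (π θ')) θ (Pi.single j 1)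
        = -∑ r, ∑ i, (b θ)⁻¹ r i * g θ i j *
            ∫ α in Set.Ioo (0:ℝ) 1,
              deriv (fun a => ξ r θ a) α *
                ∑ s, fderiv ℝ
                  (fun θ' => ∑ t, (g θ')⁻¹ s t * deriv (fun a => ξ t θ' a) α)
                  θ (Pi.single s 1) := by
  intro j θ hθ
  have hΩn : Ω ∈ nhds θ := hΩ.mem_nhds hθ
  have hπθ : 0 < π θ := hπpos θ hθ
  have hπd : DifferentiableAt ℝ π θ := (hπC1.differentiableOn one_ne_zero).differentiableAt hΩn
  have hgd : ∀ x ∈ Ω, ∀ i' j' : Fin p, DifferentiableAt ℝ (fun θ' => g θ' i' j') x :=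
    fun x hx i' j' => ((hg_C1 i' j').differentiableOn one_ne_zero).differentiableAt (hΩ.mem_nhds hx)
  have hdet : ∀ x ∈ Ω, (g x).det ≠ 0 := fun x hx => (hg_pd x hx).det_pos.ne'
  have hinvd : ∀ x ∈ Ω, ∀ s t, DifferentiableAt ℝ (fun θ' => (g θ')⁻¹ s t) x :=
    fun x hx s t => aux_inv_diff (hgd x hx) (hdet x hx) s t
  have hU : IsOpen (Ω ×ˢ Set.Ioo (0:ℝ) 1) := hΩ.prod isOpen_Ioo
  -- differentiability of the full ξ function at points of U
  have hFd : ∀ t : Fin p, ∀ x ∈ Ω, ∀ a ∈ Set.Ioo (0:ℝ) 1,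
      DifferentiableAt ℝ (fun z : (Fin p → ℝ) × ℝ => ξ t z.1 z.2) (x, a) := by
    intro t x hx a ha
    exact (((hξ_smooth t).contDiffAt (hU.mem_nhds ⟨hx, ha⟩)).differentiableAt (by simp))
  -- derivative in α
  have hda : ∀ t : Fin p, ∀ x ∈ Ω, ∀ a ∈ Set.Ioo (0:ℝ) 1,
      HasDerivAt (fun a' => ξ t x a')
        (fderiv ℝ (fun z : (Fin p → ℝ) × ℝ => ξ t z.1 z.2) (x, a) (0, 1)) a := by
    intro t x hx a ha
    have hc : HasDerivAt (fun a' : ℝ => (x, a')) ((0 : Fin p → ℝ), (1:ℝ)) a :=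
      (hasDerivAt_const a x).prodMk (hasDerivAt_id a)
    exact (hFd t x hx a ha).hasFDerivAt.comp_hasDerivAt a hc
  have hda' : ∀ t : Fin p, ∀ x ∈ Ω, ∀ a ∈ Set.Ioo (0:ℝ) 1,
      deriv (fun a' => ξ t x a') a
        = fderiv ℝ (fun z : (Fin p → ℝ) × ℝ => ξ t z.1 z.2) (x, a) (0, 1) :=
    fun t x hx a ha => (hda t x hx a ha).deriv
  -- derivative in θ directions
  have hdθ : ∀ t : Fin p, ∀ x ∈ Ω, ∀ a ∈ Set.Ioo (0:ℝ) 1,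
      HasFDerivAt (fun x' => ξ t x' a)
        ((fderiv ℝ (fun z : (Fin p → ℝ) × ℝ => ξ t z.1 z.2) (x, a)).comp
          ((ContinuousLinearMap.id ℝ (Fin p → ℝ)).prod 0)) x := by
    intro t x hx a ha
    have hc : HasFDerivAt (fun x' : Fin p → ℝ => (x', a))
        ((ContinuousLinearMap.id ℝ (Fin p → ℝ)).prod 0) x :=
      (hasFDerivAt_id x).prodMk (hasFDerivAt_const a x)
    exact (hFd t x hx a ha).hasFDerivAt.comp x hc
  -- smoothness of z ↦ fderiv ξ
  have hΦ : ∀ t : Fin p, ContDiffOn ℝ (⊤ : ℕ∞)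
      (fderiv ℝ (fun z : (Fin p → ℝ) × ℝ => ξ t z.1 z.2)) (Ω ×ˢ Set.Ioo (0:ℝ) 1) :=
    fun t => (hξ_smooth t).fderiv_of_isOpen hU (by simp)
  have hΦd : ∀ t : Fin p, ∀ a ∈ Set.Ioo (0:ℝ) 1,
      DifferentiableAt ℝ (fderiv ℝ (fun z : (Fin p → ℝ) × ℝ => ξ t z.1 z.2)) (θ, a) :=
    fun t a ha => ((hΦ t).contDiffAt (hU.mem_nhds ⟨hθ, ha⟩)).differentiableAt (by simp)
  have hsym : ∀ t : Fin p, ∀ a ∈ Set.Ioo (0:ℝ) 1, ∀ u v : (Fin p → ℝ) × ℝ,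
      fderiv ℝ (fderiv ℝ (fun z : (Fin p → ℝ) × ℝ => ξ t z.1 z.2)) (θ, a) u v
        = fderiv ℝ (fderiv ℝ (fun z : (Fin p → ℝ) × ℝ => ξ t z.1 z.2)) (θ, a) v u := by
    intro t a ha u v
    exact (((hξ_smooth t).contDiffAt (hU.mem_nhds ⟨hθ, ha⟩)).isSymmSndFDerivAt (by rw [minSmoothness_of_isRCLikeNormedField]; exact WithTop.coe_le_coe.mpr (le_top : (2:ℕ∞) ≤ ⊤))).eq u v
  -- α-derivative of the applied fderiv
  have hW : ∀ t : Fin p, ∀ a ∈ Set.Ioo (0:ℝ) 1, ∀ w : (Fin p → ℝ) × ℝ,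
      HasDerivAt (fun a' => fderiv ℝ (fun z : (Fin p → ℝ) × ℝ => ξ t z.1 z.2) (θ, a') w)
        (fderiv ℝ (fderiv ℝ (fun z : (Fin p → ℝ) × ℝ => ξ t z.1 z.2)) (θ, a)
          ((0 : Fin p → ℝ), (1:ℝ)) w) a := by
    intro t a ha w
    have hc : HasDerivAt (fun a' : ℝ => ((θ, a') : (Fin p → ℝ) × ℝ))
        ((0 : Fin p → ℝ), (1:ℝ)) a := (hasDerivAt_const a θ).prodMk (hasDerivAt_id a)
    have h1 := (hΦd t a ha).hasFDerivAt.comp_hasDerivAt a hc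
    have h2 := h1.clm_apply (hasDerivAt_const a w)
    simpa using h2
  -- θ-derivative of the applied fderiv (in direction Pi.single s 1), with symmetry
  have hWθ : ∀ t : Fin p, ∀ a ∈ Set.Ioo (0:ℝ) 1,
      ∃ L : (Fin p → ℝ) →L[ℝ] ℝ,
        HasFDerivAt (fun x' => fderiv ℝ (fun z : (Fin p → ℝ) × ℝ => ξ t z.1 z.2) (x', a)
            ((0 : Fin p → ℝ), (1:ℝ))) L θ ∧
        ∀ s, L (Pi.single s 1)
          = fderiv ℝ (fderiv ℝ (fun z : (Fin p → ℝ) × ℝ => ξ t z.1 z.2)) (θ, a)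
              ((0 : Fin p → ℝ), (1:ℝ)) (Pi.single s 1, 0) := by
    intro t a ha
    have hc : HasFDerivAt (fun x' : Fin p → ℝ => ((x', a) : (Fin p → ℝ) × ℝ))
        ((ContinuousLinearMap.id ℝ (Fin p → ℝ)).prod 0) θ :=
      (hasFDerivAt_id θ).prodMk (hasFDerivAt_const a θ)
    have h1 := (hΦd t a ha).hasFDerivAt.comp θ hc
    have h2 := h1.clm_apply (hasFDerivAt_const ((0 : Fin p → ℝ), (1:ℝ)) θ)
    refine ⟨_, h2, fun s => ?_⟩
    simp only [ContinuousLinearMap.add_apply, ContinuousLinearMap.comp_apply,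
      ContinuousLinearMap.zero_apply, ContinuousLinearMap.flip_apply,
      ContinuousLinearMap.coe_comp', Function.comp_apply, ContinuousLinearMap.prod_apply,
      ContinuousLinearMap.coe_id', id_eq, map_zero, zero_add, add_zero]
    exact hsym t a ha _ _
  -- expansion of the UPMP expression
  have hexp1 : ∀ α ∈ Set.Ioo (0:ℝ) 1, ∀ s : Fin p,
      fderiv ℝ (fun θ' => ∑ t, (g θ')⁻¹ s t * ξ t θ' α * π θ') θ (Pi.single s 1)
      = π θ * (∑ t, (fderiv ℝ (fun θ' => (g θ')⁻¹ s t) θ (Pi.single s 1) * ξ t θ α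
            + (g θ)⁻¹ s t *
              fderiv ℝ (fun z : (Fin p → ℝ) × ℝ => ξ t z.1 z.2) (θ, α) (Pi.single s 1, 0)))
        + (∑ t, (g θ)⁻¹ s t * ξ t θ α) * fderiv ℝ π θ (Pi.single s 1) := by
    intro α hα s
    have hξθd : ∀ t : Fin p, DifferentiableAt ℝ (fun θ' => ξ t θ' α) θ :=
      fun t => (hdθ t θ hθ α hα).differentiableAt
    have hterm : ∀ t : Fin p, DifferentiableAt ℝ (fun θ' => (g θ')⁻¹ s t * ξ t θ' α) θ :=
      fun t => (hinvd θ hθ s t).mul (hξθd t)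
    have hQd : DifferentiableAt ℝ (fun θ' => ∑ t, (g θ')⁻¹ s t * ξ t θ' α) θ :=
      DifferentiableAt.fun_sum fun t _ => hterm t
    have h1 : (fun θ' => ∑ t, (g θ')⁻¹ s t * ξ t θ' α * π θ')
        = fun θ' => (∑ t, (g θ')⁻¹ s t * ξ t θ' α) * π θ' := by
      funext θ'; rw [Finset.sum_mul]
    rw [h1, fderiv_fun_mul hQd hπd]
    simp only [ContinuousLinearMap.add_apply, ContinuousLinearMap.smul_apply, smul_eq_mul]
    rw [fderiv_fun_sum fun t _ => hterm t]
    simp only [ContinuousLinearMap.sum_apply]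
    have h2 : ∀ t : Fin p, fderiv ℝ (fun θ' => (g θ')⁻¹ s t * ξ t θ' α) θ (Pi.single s 1)
        = fderiv ℝ (fun θ' => (g θ')⁻¹ s t) θ (Pi.single s 1) * ξ t θ α
          + (g θ)⁻¹ s t *
            fderiv ℝ (fun z : (Fin p → ℝ) × ℝ => ξ t z.1 z.2) (θ, α) (Pi.single s 1, 0) := by
      intro t
      rw [fderiv_fun_mul (hinvd θ hθ s t) (hξθd t)]
      have h3 : fderiv ℝ (fun θ' => ξ t θ' α) θ
          = (fderiv ℝ (fun z : (Fin p → ℝ) × ℝ => ξ t z.1 z.2) (θ, α)).comp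
              ((ContinuousLinearMap.id ℝ (Fin p → ℝ)).prod 0) := (hdθ t θ hθ α hα).fderiv
      rw [h3]
      simp only [ContinuousLinearMap.add_apply, ContinuousLinearMap.smul_apply, smul_eq_mul,
        ContinuousLinearMap.coe_comp', Function.comp_apply, ContinuousLinearMap.prod_apply,
        ContinuousLinearMap.coe_id', id_eq, ContinuousLinearMap.zero_apply]
      ring
    rw [Finset.sum_congr rfl fun t _ => h2 t]
    ring
  -- the UPMP identity, as a function of α
  have hzero : ∀ a ∈ Set.Ioo (0:ℝ) 1,
      π θ * (∑ s, ∑ t, (fderiv ℝ (fun θ' => (g θ')⁻¹ s t) θ (Pi.single s 1) * ξ t θ a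
            + (g θ)⁻¹ s t *
              fderiv ℝ (fun z : (Fin p → ℝ) × ℝ => ξ t z.1 z.2) (θ, a) (Pi.single s 1, 0)))
        + ∑ s, ((∑ t, (g θ)⁻¹ s t * ξ t θ a) * fderiv ℝ π θ (Pi.single s 1)) = 0 := by
    intro a ha
    have h0 := hUPMP θ hθ a ha
    rw [Finset.sum_congr rfl fun s _ => hexp1 a ha s, Finset.sum_add_distrib,
      ← Finset.mul_sum] at h0
    exact h0
  -- differentiate the identity in α
  have hkey0 : ∀ α ∈ Set.Ioo (0:ℝ) 1,
      π θ * (∑ s, ∑ t, (fderiv ℝ (fun θ' => (g θ')⁻¹ s t) θ (Pi.single s 1) *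
              fderiv ℝ (fun z : (Fin p → ℝ) × ℝ => ξ t z.1 z.2) (θ, α) ((0 : Fin p → ℝ), (1:ℝ))
            + (g θ)⁻¹ s t *
              fderiv ℝ (fderiv ℝ (fun z : (Fin p → ℝ) × ℝ => ξ t z.1 z.2)) (θ, α)
                ((0 : Fin p → ℝ), (1:ℝ)) (Pi.single s 1, 0)))
        + ∑ s, ((∑ t, (g θ)⁻¹ s t *
              fderiv ℝ (fun z : (Fin p → ℝ) × ℝ => ξ t z.1 z.2) (θ, α) ((0 : Fin p → ℝ), (1:ℝ)))
            * fderiv ℝ π θ (Pi.single s 1)) = 0 := by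
    intro α hα
    have hHd : HasDerivAt (fun a =>
        π θ * (∑ s, ∑ t, (fderiv ℝ (fun θ' => (g θ')⁻¹ s t) θ (Pi.single s 1) * ξ t θ a
            + (g θ)⁻¹ s t *
              fderiv ℝ (fun z : (Fin p → ℝ) × ℝ => ξ t z.1 z.2) (θ, a) (Pi.single s 1, 0)))
        + ∑ s, ((∑ t, (g θ)⁻¹ s t * ξ t θ a) * fderiv ℝ π θ (Pi.single s 1)))
        (π θ * (∑ s, ∑ t, (fderiv ℝ (fun θ' => (g θ')⁻¹ s t) θ (Pi.single s 1) *
              fderiv ℝ (fun z : (Fin p → ℝ) × ℝ => ξ t z.1 z.2) (θ, α) ((0 : Fin p → ℝ), (1:ℝ))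
            + (g θ)⁻¹ s t *
              fderiv ℝ (fderiv ℝ (fun z : (Fin p → ℝ) × ℝ => ξ t z.1 z.2)) (θ, α)
                ((0 : Fin p → ℝ), (1:ℝ)) (Pi.single s 1, 0)))
        + ∑ s, ((∑ t, (g θ)⁻¹ s t *
              fderiv ℝ (fun z : (Fin p → ℝ) × ℝ => ξ t z.1 z.2) (θ, α) ((0 : Fin p → ℝ), (1:ℝ)))
            * fderiv ℝ π θ (Pi.single s 1))) α := by
      refine HasDerivAt.fun_add (HasDerivAt.const_mul _ (HasDerivAt.fun_sum fun s _ =>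
        HasDerivAt.fun_sum fun t _ => HasDerivAt.fun_add
          (HasDerivAt.const_mul _ (hda t θ hθ α hα))
          (HasDerivAt.const_mul _ (hW t α hα (Pi.single s 1, 0)))))
        (HasDerivAt.fun_sum fun s _ => HasDerivAt.mul_const
          (HasDerivAt.fun_sum fun t _ => HasDerivAt.const_mul _ (hda t θ hθ α hα)) _)
    have hev : (fun a =>
        π θ * (∑ s, ∑ t, (fderiv ℝ (fun θ' => (g θ')⁻¹ s t) θ (Pi.single s 1) * ξ t θ a
            + (g θ)⁻¹ s t *
              fderiv ℝ (fun z : (Fin p → ℝ) × ℝ => ξ t z.1 z.2) (θ, a) (Pi.single s 1, 0)))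
        + ∑ s, ((∑ t, (g θ)⁻¹ s t * ξ t θ a) * fderiv ℝ π θ (Pi.single s 1)))
        =ᶠ[nhds α] (fun _ => (0:ℝ)) := by
      filter_upwards [Ioo_mem_nhds hα.1 hα.2] with a ha
      exact hzero a ha
    have h1 := hHd.deriv
    rw [hev.deriv_eq, deriv_const] at h1
    exact h1.symm
  -- identification of the inner sum of the conclusion
  have hS : ∀ α ∈ Set.Ioo (0:ℝ) 1,
      (∑ s, fderiv ℝ (fun θ' => ∑ t, (g θ')⁻¹ s t * deriv (fun a => ξ t θ' a) α)
          θ (Pi.single s 1))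
      = ∑ s, ∑ t, (fderiv ℝ (fun θ' => (g θ')⁻¹ s t) θ (Pi.single s 1) *
              fderiv ℝ (fun z : (Fin p → ℝ) × ℝ => ξ t z.1 z.2) (θ, α) ((0 : Fin p → ℝ), (1:ℝ))
            + (g θ)⁻¹ s t *
              fderiv ℝ (fderiv ℝ (fun z : (Fin p → ℝ) × ℝ => ξ t z.1 z.2)) (θ, α)
                ((0 : Fin p → ℝ), (1:ℝ)) (Pi.single s 1, 0)) := by
    intro α hα
    refine Finset.sum_congr rfl fun s _ => ?_
    have hev : (fun θ' => ∑ t, (g θ')⁻¹ s t * deriv (fun a => ξ t θ' a) α)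
        =ᶠ[nhds θ] (fun θ' => ∑ t, (g θ')⁻¹ s t *
          fderiv ℝ (fun z : (Fin p → ℝ) × ℝ => ξ t z.1 z.2) (θ', α) ((0 : Fin p → ℝ), (1:ℝ))) := by
      filter_upwards [hΩn] with x hx
      exact Finset.sum_congr rfl fun t _ => by rw [hda' t x hx α hα]
    rw [hev.fderiv_eq]
    have hterm : ∀ t : Fin p, DifferentiableAt ℝ (fun θ' => (g θ')⁻¹ s t *
        fderiv ℝ (fun z : (Fin p → ℝ) × ℝ => ξ t z.1 z.2) (θ', α) ((0 : Fin p → ℝ), (1:ℝ))) θ :=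
      fun t => (hinvd θ hθ s t).mul (hWθ t α hα).choose_spec.1.differentiableAt
    rw [fderiv_fun_sum fun t _ => hterm t]
    simp only [ContinuousLinearMap.sum_apply]
    refine Finset.sum_congr rfl fun t _ => ?_
    rw [fderiv_fun_mul (hinvd θ hθ s t) (hWθ t α hα).choose_spec.1.differentiableAt]
    rw [(hWθ t α hα).choose_spec.1.fderiv]
    simp only [ContinuousLinearMap.add_apply, ContinuousLinearMap.smul_apply, smul_eq_mul]
    rw [(hWθ t α hα).choose_spec.2 s]
    ring
  -- main pointwise identity
  have hkey : ∀ α ∈ Set.Ioo (0:ℝ) 1,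
      (∑ s, fderiv ℝ (fun θ' => ∑ t, (g θ')⁻¹ s t * deriv (fun a => ξ t θ' a) α)
          θ (Pi.single s 1))
      = -(π θ)⁻¹ * ∑ s, ∑ t, (fderiv ℝ π θ (Pi.single s 1) * (g θ)⁻¹ s t *
          deriv (fun a => ξ t θ a) α) := by
    intro α hα
    have h0 := hkey0 α hα
    rw [hS α hα]
    have hT : ∑ s, ((∑ t, (g θ)⁻¹ s t *
          fderiv ℝ (fun z : (Fin p → ℝ) × ℝ => ξ t z.1 z.2) (θ, α) ((0 : Fin p → ℝ), (1:ℝ)))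
            * fderiv ℝ π θ (Pi.single s 1))
        = ∑ s, ∑ t, (fderiv ℝ π θ (Pi.single s 1) * (g θ)⁻¹ s t *
          deriv (fun a => ξ t θ a) α) := by
      refine Finset.sum_congr rfl fun s _ => ?_
      rw [Finset.sum_mul]
      refine Finset.sum_congr rfl fun t _ => ?_
      rw [hda' t θ hθ α hα]; ring
    rw [hT] at h0
    have hne : π θ ≠ 0 := hπθ.ne'
    have hgen : ∀ X Y : ℝ, π θ * X + Y = 0 → X = -(π θ)⁻¹ * Y := by
      intro X Y h
      have hY : Y = -(π θ * X) := by linarith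
      rw [hY]
      field_simp
    exact hgen _ _ h0
  -- the integral computation
  have hb_symm : ∀ r t : Fin p, b θ r t = b θ t r := by
    intro r t
    rw [hb_def θ hθ r t, hb_def θ hθ t r]
    congr 1
    funext a
    ring
  have hInt : ∀ r : Fin p,
      (∫ α in Set.Ioo (0:ℝ) 1, deriv (fun a => ξ r θ a) α *
        ∑ s, fderiv ℝ (fun θ' => ∑ t, (g θ')⁻¹ s t * deriv (fun a => ξ t θ' a) α)
          θ (Pi.single s 1))
      = ∑ s, ∑ t, (-(π θ)⁻¹ * fderiv ℝ π θ (Pi.single s 1) * (g θ)⁻¹ s t) * b θ r t := by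
    intro r
    rw [setIntegral_congr_fun (g := fun α => ∑ s, ∑ t,
        ((-(π θ)⁻¹ * fderiv ℝ π θ (Pi.single s 1) * (g θ)⁻¹ s t) *
          (deriv (fun a => ξ r θ a) α * deriv (fun a => ξ t θ a) α))) measurableSet_Ioo
        (fun α hα => ?_)]
    · rw [integral_finset_sum _ fun s _ => integrable_finset_sum _
        fun t _ => (hξ_fin r t θ hθ).const_mul _]
      refine Finset.sum_congr rfl fun s _ => ?_
      rw [integral_finset_sum _ fun t _ => (hξ_fin r t θ hθ).const_mul _]
      refine Finset.sum_congr rfl fun t _ => ?_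
      rw [MeasureTheory.integral_const_mul, ← hb_def θ hθ r t]
    · rw [hkey α hα]
      simp only [Finset.mul_sum]
      exact Finset.sum_congr rfl fun s _ => Finset.sum_congr rfl fun t _ => by ring
  -- the logarithmic derivative
  have hlog : fderiv ℝ (fun θ' => Real.log (π θ')) θ = (π θ)⁻¹ • fderiv ℝ π θ :=
    (hπd.hasFDerivAt.log hπθ.ne').fderiv
  -- final matrix algebra
  have main : -∑ r, ∑ i, (b θ)⁻¹ r i * g θ i j *
      (∑ s, ∑ t, (-(π θ)⁻¹ * fderiv ℝ π θ (Pi.single s 1) * (g θ)⁻¹ s t) * b θ r t)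
      = (π θ)⁻¹ * fderiv ℝ π θ (Pi.single j 1) := by
    have hbT : (b θ).transpose = b θ := Matrix.ext fun t r => by
      rw [Matrix.transpose_apply]; exact hb_symm r t
    have hgg : ∀ s : Fin p, (∑ i, (g θ)⁻¹ s i * g θ i j)
        = (1 : Matrix (Fin p) (Fin p) ℝ) s j := by
      intro s
      rw [← Matrix.mul_apply, Matrix.nonsing_inv_mul _ (isUnit_iff_ne_zero.2 (hdet θ hθ))]
    have e1 : ∀ r, (∑ s, ∑ t, (-(π θ)⁻¹ * fderiv ℝ π θ (Pi.single s 1) * (g θ)⁻¹ s t) * b θ r t)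
        = (b θ).mulVec (fun t => ∑ s, -(π θ)⁻¹ * fderiv ℝ π θ (Pi.single s 1) * (g θ)⁻¹ s t) r := by
      intro r
      rw [Finset.sum_comm]
      simp only [Matrix.mulVec, dotProduct]
      exact Finset.sum_congr rfl fun t _ => by rw [← Finset.sum_mul, mul_comm]
    have e3 : ∀ r, (∑ i, (b θ)⁻¹ r i * g θ i j *
        (∑ s, ∑ t, (-(π θ)⁻¹ * fderiv ℝ π θ (Pi.single s 1) * (g θ)⁻¹ s t) * b θ r t))
        = ((b θ)⁻¹.mulVec (fun i => g θ i j) r) *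
          ((b θ).mulVec (fun t => ∑ s, -(π θ)⁻¹ * fderiv ℝ π θ (Pi.single s 1) * (g θ)⁻¹ s t) r) := by
      intro r
      rw [← Finset.sum_mul, e1 r]
      congr 1
    rw [Finset.sum_congr rfl fun r _ => e3 r]
    have e4 : (∑ r, ((b θ)⁻¹.mulVec (fun i => g θ i j) r) *
        ((b θ).mulVec (fun t => ∑ s, -(π θ)⁻¹ * fderiv ℝ π θ (Pi.single s 1) * (g θ)⁻¹ s t) r))
        = dotProduct (fun i => g θ i j)
            (fun t => ∑ s, -(π θ)⁻¹ * fderiv ℝ π θ (Pi.single s 1) * (g θ)⁻¹ s t) := by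
      have : (∑ r, ((b θ)⁻¹.mulVec (fun i => g θ i j) r) *
          ((b θ).mulVec (fun t => ∑ s, -(π θ)⁻¹ * fderiv ℝ π θ (Pi.single s 1) * (g θ)⁻¹ s t) r))
          = dotProduct ((b θ)⁻¹.mulVec (fun i => g θ i j))
            ((b θ).mulVec (fun t => ∑ s, -(π θ)⁻¹ * fderiv ℝ π θ (Pi.single s 1) * (g θ)⁻¹ s t)) := rfl
      rw [this, Matrix.dotProduct_mulVec, ← Matrix.mulVec_transpose, hbT,
        Matrix.mulVec_mulVec, Matrix.mul_nonsing_inv _ (hb_inv θ hθ), Matrix.one_mulVec]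
    rw [e4]
    simp only [dotProduct]
    have e5 : ∀ i, g θ i j * (∑ s, -(π θ)⁻¹ * fderiv ℝ π θ (Pi.single s 1) * (g θ)⁻¹ s i)
        = ∑ s, -((π θ)⁻¹ * fderiv ℝ π θ (Pi.single s 1) * ((g θ)⁻¹ s i * g θ i j)) := by
      intro i
      rw [Finset.mul_sum]
      exact Finset.sum_congr rfl fun s _ => by ring
    rw [Finset.sum_congr rfl fun i _ => e5 i, Finset.sum_comm]
    simp only [Finset.sum_neg_distrib, neg_neg]
    have e6 : ∀ s, (∑ i, (π θ)⁻¹ * fderiv ℝ π θ (Pi.single s 1) * ((g θ)⁻¹ s i * g θ i j))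
        = (π θ)⁻¹ * fderiv ℝ π θ (Pi.single s 1) * (1 : Matrix (Fin p) (Fin p) ℝ) s j := by
      intro s
      rw [← Finset.mul_sum, hgg s]
    rw [Finset.sum_congr rfl fun s _ => e6 s]
    simp [Matrix.one_apply, mul_ite, mul_one, mul_zero, Finset.sum_ite_eq']
  -- conclude
  rw [hlog]
  simp only [ContinuousLinearMap.smul_apply, smul_eq_mul]
  rw [Finset.sum_congr rfl fun r (_ : r ∈ Finset.univ) =>
    Finset.sum_congr rfl fun i (_ : i ∈ Finset.univ) => by rw [hInt r]]
  exact main.symm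

/-- **Theorem 4.1.** Let `Ω ⊆ ℝ^p` be open and connected, `g` a C¹ field
of symmetric positive-definite matrices with inverse entries `g^{st}`, and
`ξ : Ω × (0,1) → ℝ^p` smooth, with `b_{ij}(θ) = ∫₀¹ (∂ξ_i/∂α)(∂ξ_j/∂α) dα` nonsingular
at every `θ`, with inverse entries `b^{ri}`.  If `π > 0` is C¹ and satisfies
`∂_s{g^{st}ξ_tπ} = 0` for every `θ ∈ Ω` and `α ∈ (0,1)`, then `π` is unique up to a
positive multiplicative constant and `λ = log π` satisfies
`∂_jλ = -b^{ri}g_{ij} ∫₀¹ (∂ξ_r/∂α)·∂_s{g^{st}(∂ξ_t/∂α)} dα`. -/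
theorem stmt_11 (p : ℕ) (Ω : Set (Fin p → ℝ)) (hΩ : IsOpen Ω) (hconn : IsConnected Ω)
    (g : (Fin p → ℝ) → Matrix (Fin p) (Fin p) ℝ)
    (hg_C1 : ∀ i j : Fin p, ContDiffOn ℝ 1 (fun θ => g θ i j) Ω)
    (hg_pd : ∀ θ ∈ Ω, (g θ).PosDef)
    (ξ : Fin p → (Fin p → ℝ) → ℝ → ℝ)
    (hξ_smooth : ∀ t : Fin p, ContDiffOn ℝ (⊤ : ℕ∞)
      (fun z : (Fin p → ℝ) × ℝ => ξ t z.1 z.2) (Ω ×ˢ Set.Ioo (0:ℝ) 1))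
    (hξ_fin : ∀ i j : Fin p, ∀ θ ∈ Ω, IntegrableOn
      (fun α => deriv (fun a => ξ i θ a) α * deriv (fun a => ξ j θ a) α)
      (Set.Ioo (0:ℝ) 1))
    (b : (Fin p → ℝ) → Matrix (Fin p) (Fin p) ℝ)
    (hb_def : ∀ θ ∈ Ω, ∀ i j : Fin p, b θ i j
      = ∫ α in Set.Ioo (0:ℝ) 1,
          deriv (fun a => ξ i θ a) α * deriv (fun a => ξ j θ a) α)
    -- differentiation under the integral sign is valid
    (hb_dui : ∀ i j s : Fin p, ∀ θ ∈ Ω,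
      fderiv ℝ (fun θ' => b θ' i j) θ (Pi.single s 1)
        = ∫ α in Set.Ioo (0:ℝ) 1,
            (fderiv ℝ (fun θ' => deriv (fun a => ξ i θ' a) α) θ (Pi.single s 1)
                * deriv (fun a => ξ j θ a) α
              + deriv (fun a => ξ i θ a) α
                * fderiv ℝ (fun θ' => deriv (fun a => ξ j θ' a) α) θ (Pi.single s 1)))
    (hb_inv : ∀ θ ∈ Ω, IsUnit (b θ).det)
    (π : (Fin p → ℝ) → ℝ) (hπC1 : ContDiffOn ℝ 1 π Ω) (hπpos : ∀ θ ∈ Ω, 0 < π θ)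
    (hUPMP : ∀ θ ∈ Ω, ∀ α ∈ Set.Ioo (0:ℝ) 1,
      ∑ s, fderiv ℝ (fun θ' => ∑ t, (g θ')⁻¹ s t * ξ t θ' α * π θ')
        θ (Pi.single s 1) = 0) :
    (∀ π' : (Fin p → ℝ) → ℝ, ContDiffOn ℝ 1 π' Ω → (∀ θ ∈ Ω, 0 < π' θ) →
      (∀ θ ∈ Ω, ∀ α ∈ Set.Ioo (0:ℝ) 1,
        ∑ s, fderiv ℝ (fun θ' => ∑ t, (g θ')⁻¹ s t * ξ t θ' α * π' θ')
          θ (Pi.single s 1) = 0) →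
      ∃ c : ℝ, 0 < c ∧ ∀ θ ∈ Ω, π' θ = c * π θ) ∧
    (∀ j : Fin p, ∀ θ ∈ Ω,
      fderiv ℝ (fun θ' => Real.log (π θ')) θ (Pi.single j 1)
        = -∑ r, ∑ i, (b θ)⁻¹ r i * g θ i j *
            ∫ α in Set.Ioo (0:ℝ) 1,
              deriv (fun a => ξ r θ a) α *
                ∑ s, fderiv ℝ
                  (fun θ' => ∑ t, (g θ')⁻¹ s t * deriv (fun a => ξ t θ' a) α)
                  θ (Pi.single s 1)) := by
  have hgrad := aux_key hΩ g hg_C1 hg_pd ξ hξ_smooth hξ_fin b hb_def hb_inv π hπC1 hπpos hUPMP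
  constructor
  · intro π' hπ'C1 hπ'pos hUPMP'
    have hgrad' := aux_key hΩ g hg_C1 hg_pd ξ hξ_smooth hξ_fin b hb_def hb_inv π' hπ'C1
      hπ'pos hUPMP'
    -- the log-difference has zero derivative on Ω
    have hlogd : ∀ x ∈ Ω, DifferentiableAt ℝ (fun θ' => Real.log (π θ')) x := by
      intro x hx
      have hπd : DifferentiableAt ℝ π x :=
        (hπC1.differentiableOn one_ne_zero).differentiableAt (hΩ.mem_nhds hx)
      exact (hπd.hasFDerivAt.log (hπpos x hx).ne').differentiableAt
    have hlogd' : ∀ x ∈ Ω, DifferentiableAt ℝ (fun θ' => Real.log (π' θ')) x := by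
      intro x hx
      have hπ'd : DifferentiableAt ℝ π' x :=
        (hπ'C1.differentiableOn one_ne_zero).differentiableAt (hΩ.mem_nhds hx)
      exact (hπ'd.hasFDerivAt.log (hπ'pos x hx).ne').differentiableAt
    have hconst : ∀ x ∈ Ω, ∀ y ∈ Ω,
        Real.log (π' x) - Real.log (π x) = Real.log (π' y) - Real.log (π y) := by
      refine aux_const hΩ hconn.isPreconnected
        (f := fun θ' => Real.log (π' θ') - Real.log (π θ'))
        (fun x hx => (hlogd' x hx).sub (hlogd x hx)) ?_
      intro x hx
      rw [fderiv_fun_sub (hlogd' x hx) (hlogd x hx)]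
      apply aux_clm_eq_zero
      intro s
      rw [ContinuousLinearMap.sub_apply, hgrad' s x hx, hgrad s x hx, sub_self]
    obtain ⟨θ₀, hθ₀⟩ := hconn.nonempty
    refine ⟨π' θ₀ / π θ₀, div_pos (hπ'pos θ₀ hθ₀) (hπpos θ₀ hθ₀), ?_⟩
    intro x hx
    have h1 := hconst x hx θ₀ hθ₀
    have h2 := congrArg Real.exp h1
    rw [Real.exp_sub, Real.exp_sub, Real.exp_log (hπ'pos x hx), Real.exp_log (hπpos x hx),
      Real.exp_log (hπ'pos θ₀ hθ₀), Real.exp_log (hπpos θ₀ hθ₀)] at h2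
    rw [div_eq_div_iff (hπpos x hx).ne' (hπpos θ₀ hθ₀).ne'] at h2
    rw [div_mul_eq_mul_div, eq_div_iff (hπpos θ₀ hθ₀).ne']
    linarith [h2]
  · exact fun j θ hθ => hgrad j θ hθ
end

section
/- Let Ω ⊆ ℝ be an open interval, g : Ω → (0,∞) a C¹ function, and ξ : Ω × (0,1) → ℝ a function that is C¹ in θ and nowhere zero. Then: (i) for each fixed α ∈ (0,1), a positive C¹ function π : Ω → (0,∞) satisfies d/dθ{g(θ)^{−1}ξ(θ,α)π(θ)} = 0 if and only if π(θ) = c·g(θ)/ξ(θ,α) for some nonzero constant c; and (ii) there exists a positive C¹ function π, not depending on α, satisfying d/dθ{g(θ)^{−1}ξ(θ,α)π(θ)} = 0 for every α ∈ (0,1) — i.e., a uniformly predictive matching prior exists — if and only if ξ factorizes as ξ(θ,α) = Q(θ)R(α) for some functions Q : Ω → ℝ and R : (0,1) → ℝ. -/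
open Set

/-!
For fixed `α`, the matching equation says that `g⁻¹ ξ(·, α) π` has zero derivative on the
connected open set `Ω`, i.e. is a constant `c`; solving for `π` gives `π = c g / ξ(·, α)`.
A single `π` works for every `α` iff `ξ(θ, α) = c(α) g(θ) / π(θ)`, which is a factorization.
Conversely, if `ξ = Q R`, then `π = c g / ξ(·, α₀)`, with the sign of `c` chosen to make `π`
positive, gives `g⁻¹ ξ(·, α) π = c R(α) / R(α₀)` for every `α`.
-/

theorem IsPreconnected.mul_pos_of_ne_zero {X α : Type*} [TopologicalSpace X] [Field α]
    [LinearOrder α] [IsStrictOrderedRing α] [TopologicalSpace α] [OrderClosedTopology α]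
    {s : Set X} (hs : IsPreconnected s) {f : X → α} (hf : ContinuousOn f s)
    (hf0 : ∀ x ∈ s, f x ≠ 0) {x y : X} (hx : x ∈ s) (hy : y ∈ s) : 0 < f x * f y := by
  by_contra! hxy
  rcases mul_nonpos_iff.mp hxy with ⟨hfx, hfy⟩ | ⟨hfx, hfy⟩
  · obtain ⟨z, hz, hz0⟩ := hs.intermediate_value hy hx hf ⟨hfy, hfx⟩
    exact hf0 z hz hz0
  · obtain ⟨z, hz, hz0⟩ := hs.intermediate_value hx hy hf ⟨hfx, hfy⟩
    exact hf0 z hz hz0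

theorem IsPreconnected.exists_pos_contDiffOn_const_mul_div {E : Type*} [NormedAddCommGroup E]
    [NormedSpace ℝ E] {Ω : Set E} {g h : E → ℝ} {n : WithTop ℕ∞} (hΩ : IsPreconnected Ω)
    (hΩne : Ω.Nonempty) (hg : ContDiffOn ℝ n g Ω) (hgpos : ∀ θ ∈ Ω, 0 < g θ)
    (hh : ContDiffOn ℝ n h Ω) (hh0 : ∀ θ ∈ Ω, h θ ≠ 0) :
    ∃ c : ℝ, ContDiffOn ℝ n (fun θ => c * g θ / h θ) Ω ∧ ∀ θ ∈ Ω, 0 < c * g θ / h θ := by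
  obtain ⟨θ₀, hθ₀⟩ := hΩne
  refine ⟨h θ₀, (contDiffOn_const.mul hg).div hh hh0, fun θ hθ => ?_⟩
  have hsign := hΩ.mul_pos_of_ne_zero hh.continuousOn hh0 hθ₀ hθ
  rw [mul_div_right_comm]
  exact mul_pos (div_pos_iff.2 (mul_pos_iff.1 hsign)) (hgpos θ hθ)

section Matching

variable {𝕜 : Type*} [RCLike 𝕜] {Ω : Set 𝕜}

theorem IsOpen.deriv_eq_zero_iff_exists_eqOn_const {G : Type*} [NormedAddCommGroup G]
    [NormedSpace 𝕜 G] {f : 𝕜 → G} (hΩ : IsOpen Ω) (hΩc : IsPreconnected Ω)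
    (hf : DifferentiableOn 𝕜 f Ω) : (∀ θ ∈ Ω, deriv f θ = 0) ↔ ∃ c, ∀ θ ∈ Ω, f θ = c := by
  refine ⟨fun h0 => hΩ.exists_is_const_of_deriv_eq_zero hΩc hf h0, ?_⟩
  rintro ⟨c, hc⟩ θ hθ
  exact (Filter.eventuallyEq_of_mem (hΩ.mem_nhds hθ) hc).deriv_eq.trans (deriv_const θ c)

theorem IsOpen.deriv_inv_mul_mul_eq_zero_iff {g h π : 𝕜 → 𝕜} (hΩ : IsOpen Ω)
    (hΩc : IsPreconnected Ω) (hg : DifferentiableOn 𝕜 g Ω) (hh : DifferentiableOn 𝕜 h Ω)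
    (hπ : DifferentiableOn 𝕜 π Ω) (hg0 : ∀ θ ∈ Ω, g θ ≠ 0) (hh0 : ∀ θ ∈ Ω, h θ ≠ 0) :
    (∀ θ ∈ Ω, deriv (fun θ' => (g θ')⁻¹ * h θ' * π θ') θ = 0) ↔
      ∃ c, ∀ θ ∈ Ω, π θ = c * g θ / h θ := by
  rw [hΩ.deriv_eq_zero_iff_exists_eqOn_const (f := fun θ' => (g θ')⁻¹ * h θ' * π θ') hΩc
    (((hg.inv hg0).mul hh).mul hπ)]
  refine exists_congr fun c => forall₂_congr fun θ hθ => ?_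
  have hgθ := hg0 θ hθ
  have hhθ := hh0 θ hθ
  constructor <;> intro hc
  · rw [← hc]; field_simp
  · rw [hc]; field_simp

end Matching

/-- Scalar-parameter highest predictive density region matching.
Let `Ω ⊆ ℝ` be an open interval, `g : Ω → (0,∞)` C¹, and `ξ(θ,α)` C¹ in `θ` and nowhere
zero.  Then: (i) for each fixed `α ∈ (0,1)`, a positive C¹ function `π` satisfies
`d/dθ{g⁻¹ξπ} = 0` iff `π = c·g/ξ(·,α)` for some nonzero constant `c`; and (ii) a
uniformly predictive matching prior (one `π` matching for every `α`) exists iff `ξ`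
factorizes as `ξ(θ,α) = Q(θ)R(α)`. -/
theorem stmt_12 (Ω : Set ℝ) (hΩopen : IsOpen Ω) (hΩconn : IsPreconnected Ω)
    (hΩne : Ω.Nonempty)
    (g : ℝ → ℝ) (hgC1 : ContDiffOn ℝ 1 g Ω) (hgpos : ∀ θ ∈ Ω, 0 < g θ)
    (ξ : ℝ → ℝ → ℝ)
    (hξC1 : ∀ α ∈ Set.Ioo (0:ℝ) 1, ContDiffOn ℝ 1 (fun θ => ξ θ α) Ω)
    (hξne : ∀ θ ∈ Ω, ∀ α ∈ Set.Ioo (0:ℝ) 1, ξ θ α ≠ 0) :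
    (∀ α ∈ Set.Ioo (0:ℝ) 1, ∀ π : ℝ → ℝ,
      ContDiffOn ℝ 1 π Ω → (∀ θ ∈ Ω, 0 < π θ) →
      ((∀ θ ∈ Ω, deriv (fun θ' => (g θ')⁻¹ * ξ θ' α * π θ') θ = 0) ↔
        ∃ c : ℝ, c ≠ 0 ∧ ∀ θ ∈ Ω, π θ = c * g θ / ξ θ α)) ∧
    ((∃ π : ℝ → ℝ, ContDiffOn ℝ 1 π Ω ∧ (∀ θ ∈ Ω, 0 < π θ) ∧
        ∀ α ∈ Set.Ioo (0:ℝ) 1, ∀ θ ∈ Ω,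
          deriv (fun θ' => (g θ')⁻¹ * ξ θ' α * π θ') θ = 0) ↔
      ∃ Q : ℝ → ℝ, ∃ R : ℝ → ℝ, ∀ θ ∈ Ω, ∀ α ∈ Set.Ioo (0:ℝ) 1,
        ξ θ α = Q θ * R α) := by
  have matching_iff : ∀ α ∈ Ioo (0:ℝ) 1, ∀ π : ℝ → ℝ, ContDiffOn ℝ 1 π Ω →
      ((∀ θ ∈ Ω, deriv (fun θ' => (g θ')⁻¹ * ξ θ' α * π θ') θ = 0) ↔
        ∃ c, ∀ θ ∈ Ω, π θ = c * g θ / ξ θ α) := fun α hα π hπ =>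
    hΩopen.deriv_inv_mul_mul_eq_zero_iff hΩconn (hgC1.differentiableOn one_ne_zero)
      ((hξC1 α hα).differentiableOn one_ne_zero) (hπ.differentiableOn one_ne_zero)
      (fun θ hθ => (hgpos θ hθ).ne') (fun θ hθ => hξne θ hθ α hα)
  refine ⟨fun α hα π hπ hπpos => ?_, ?_, ?_⟩
  · rw [matching_iff α hα π hπ]
    refine ⟨fun ⟨c, hc⟩ => ⟨c, ?_, hc⟩, fun ⟨c, _, hc⟩ => ⟨c, hc⟩⟩
    rintro rfl
    obtain ⟨θ₀, hθ₀⟩ := hΩne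
    simpa [hc θ₀ hθ₀] using (hπpos θ₀ hθ₀).ne'
  · rintro ⟨π, hπ, hπpos, hmatch⟩
    choose! c hc using fun α hα => (matching_iff α hα π hπ).1 (hmatch α hα)
    refine ⟨fun θ => g θ / π θ, c, fun θ hθ α hα => ?_⟩
    have hcπ := (eq_div_iff (hξne θ hθ α hα)).1 (hc α hα θ hθ)
    rw [div_mul_eq_mul_div, eq_div_iff (hπpos θ hθ).ne']
    linear_combination hcπ
  · rintro ⟨Q, R, hQR⟩
    obtain ⟨α₀, hα₀⟩ : (Ioo (0:ℝ) 1).Nonempty := nonempty_Ioo.2 one_pos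
    obtain ⟨c, hπ, hπpos⟩ := hΩconn.exists_pos_contDiffOn_const_mul_div hΩne hgC1 hgpos
      (hξC1 α₀ hα₀) fun θ hθ => hξne θ hθ α₀ hα₀
    refine ⟨_, hπ, hπpos, fun α hα => (matching_iff α hα _ hπ).2
      ⟨c * R α / R α₀, fun θ hθ => ?_⟩⟩
    have hRα : R α ≠ 0 := right_ne_zero_of_mul (hQR θ hθ α hα ▸ hξne θ hθ α hα)
    rw [hQR θ hθ α hα, hQR θ hθ α₀ hα₀]
    field_simp
end

section
/- Let Ω = (0,∞) × (0,∞) × ℝ with coordinates θ = (θ_1, θ_2, θ_3), and let π : Ω → (0,∞) be C¹. Then π satisfies the partial differential equation ∂/∂θ_1{θ_1 π(θ)} + ∂/∂θ_2{θ_2 π(θ)} = 0 on Ω if and only if there exists a function h : (0,∞) × ℝ → (0,∞) such that π(θ) = θ_1^{−2} h(θ_1/θ_2, θ_3) for all θ ∈ Ω. -/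
open Set

/-!
Along the rays `s ↦ (s θ₁, s θ₂, θ₃)` the equation reads `s g'(s) + 2 g(s) = 0` for
`g(s) = π(s θ₁, s θ₂, θ₃)`, since the left-hand side expands to `2π + θ₁ ∂₁π + θ₂ ∂₂π`.
This says that `s² g(s)` is constant, i.e. `π` is homogeneous of degree `-2` in `(θ₁, θ₂)`,
and such functions are exactly those of the form `θ₁⁻² h(θ₁/θ₂, θ₃)`.
-/

theorem euler_ode_iff_pow_mul_eq {n : ℕ} {g g' : ℝ → ℝ}
    (hg : ∀ s, 0 < s → HasDerivAt g (g' s) s) :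
    (∀ s, 0 < s → s * g' s + n * g s = 0) ↔ ∀ s, 0 < s → s ^ n * g s = g 1 := by
  set F : ℝ → ℝ := fun s => s ^ n * g s
  set F' : ℝ → ℝ := fun s => n * s ^ (n - 1) * g s + s ^ n * g' s
  have hF : ∀ s, 0 < s → HasDerivAt F (F' s) s := fun s hs =>
    (hasDerivAt_pow n s).mul (hg s hs)
  have hF' : ∀ s, 0 < s → s * F' s = s ^ n * (s * g' s + n * g s) := by
    intro s hs
    rcases n with _ | n
    · simp [F']
    · simp only [F', Nat.add_sub_cancel, pow_succ]
      push_cast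
      ring
  have hF'_eq_zero_iff : ∀ s, 0 < s → (F' s = 0 ↔ s * g' s + n * g s = 0) := by
    intro s hs
    rw [← mul_right_inj' hs.ne', hF' s hs, mul_zero,
      mul_eq_zero, or_iff_right (pow_pos hs n).ne']
  constructor
  · intro heuler s hs
    have hconst := isOpen_Ioi.is_const_of_deriv_eq_zero isPreconnected_Ioi
      (fun t ht => (hF t ht).differentiableAt.differentiableWithinAt)
      (fun t ht => ((hF t ht).deriv).trans (((hF'_eq_zero_iff t ht).2 (heuler t ht))))
      (mem_Ioi.2 hs) (mem_Ioi.2 one_pos)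
    simpa [F] using hconst
  · intro hpow s hs
    refine (hF'_eq_zero_iff s hs).1 ((hF s hs).unique ?_)
    refine (hasDerivAt_const s (g 1)).congr_of_eventuallyEq ?_
    filter_upwards [Ioi_mem_nhds hs] with t ht using hpow t ht

def IsHomogeneousNegTwo (f : ℝ × ℝ × ℝ → ℝ) : Prop :=
  ∀ θ : ℝ × ℝ × ℝ, 0 < θ.1 → 0 < θ.2.1 →
    ∀ s, 0 < s → s ^ 2 * f (s * θ.1, s * θ.2.1, θ.2.2) = f θ

theorem hasDerivAt_comp_dilate {f : ℝ × ℝ × ℝ → ℝ} (θ : ℝ × ℝ × ℝ) {s : ℝ}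
    (hf : DifferentiableAt ℝ f (s * θ.1, s * θ.2.1, θ.2.2)) :
    HasDerivAt (fun s => f (s * θ.1, s * θ.2.1, θ.2.2))
      (fderiv ℝ f (s * θ.1, s * θ.2.1, θ.2.2) (θ.1, θ.2.1, 0)) s :=
  hf.hasFDerivAt.comp_hasDerivAt s
    ((hasDerivAt_mul_const _).prodMk ((hasDerivAt_mul_const _).prodMk (hasDerivAt_const _ _)))

theorem clm_apply_mul_mul_zero (L : ℝ × ℝ × ℝ →L[ℝ] ℝ) (s a b : ℝ) :
    L (s * a, s * b, 0) = s * L (a, b, 0) := by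
  have hv : ((s * a, s * b, 0) : ℝ × ℝ × ℝ) = s • (a, b, 0) := by simp
  rw [hv, map_smul, smul_eq_mul]

theorem fderiv_fst_mul_add_fderiv_snd_mul {f : ℝ × ℝ × ℝ → ℝ} {θ : ℝ × ℝ × ℝ}
    (hf : DifferentiableAt ℝ f θ) :
    fderiv ℝ (fun θ' : ℝ × ℝ × ℝ => θ'.1 * f θ') θ (1, 0, 0)
        + fderiv ℝ (fun θ' : ℝ × ℝ × ℝ => θ'.2.1 * f θ') θ (0, 1, 0)
      = fderiv ℝ f θ (θ.1, θ.2.1, 0) + 2 * f θ := by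
  have hv : ((θ.1, θ.2.1, 0) : ℝ × ℝ × ℝ) = θ.1 • (1, 0, 0) + θ.2.1 • (0, 1, 0) := by simp
  rw [fderiv_fun_mul differentiableAt_fst hf, fderiv_fun_mul differentiableAt_snd.fst hf,
    fderiv_fst, hasFDerivAt_snd.fst.fderiv, hv, map_add, map_smul, map_smul]
  simp only [add_apply, smul_apply, smul_eq_mul, ContinuousLinearMap.coe_fst',
    ContinuousLinearMap.coe_comp, ContinuousLinearMap.coe_snd', Function.comp_apply]
  ring

theorem euler_pde_iff_isHomogeneousNegTwo {f : ℝ × ℝ × ℝ → ℝ}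
    (hf : ∀ θ : ℝ × ℝ × ℝ, 0 < θ.1 → 0 < θ.2.1 → DifferentiableAt ℝ f θ) :
    (∀ θ : ℝ × ℝ × ℝ, 0 < θ.1 → 0 < θ.2.1 → fderiv ℝ f θ (θ.1, θ.2.1, 0) + 2 * f θ = 0) ↔
      IsHomogeneousNegTwo f := by
  have hray : ∀ θ : ℝ × ℝ × ℝ, 0 < θ.1 → 0 < θ.2.1 →
      ((∀ s, 0 < s → s * fderiv ℝ f (s * θ.1, s * θ.2.1, θ.2.2) (θ.1, θ.2.1, 0)
          + (2 : ℕ) * f (s * θ.1, s * θ.2.1, θ.2.2) = 0) ↔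
        ∀ s, 0 < s → s ^ 2 * f (s * θ.1, s * θ.2.1, θ.2.2) = f θ) := by
    intro θ h₁ h₂
    simpa only [one_mul] using euler_ode_iff_pow_mul_eq (n := 2)
      fun s hs => hasDerivAt_comp_dilate θ (hf _ (by positivity) (by positivity))
  constructor
  · intro hpde θ h₁ h₂
    refine (hray θ h₁ h₂).1 fun s hs => ?_
    rw [← clm_apply_mul_mul_zero]
    exact_mod_cast hpde _ (by positivity) (by positivity)
  · intro hhom θ h₁ h₂
    simpa using (hray θ h₁ h₂).2 (hhom θ h₁ h₂) 1 one_pos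

theorem IsHomogeneousNegTwo.eq_profile {f : ℝ × ℝ × ℝ → ℝ} (hhom : IsHomogeneousNegTwo f)
    (θ : ℝ × ℝ × ℝ) (h₁ : 0 < θ.1) (h₂ : 0 < θ.2.1) :
    f θ = (θ.1 / θ.2.1) ^ 2 * f (θ.1 / θ.2.1, 1, θ.2.2) / θ.1 ^ 2 := by
  have h := hhom (θ.1 / θ.2.1, 1, θ.2.2) (by simp only; positivity) one_pos θ.2.1 h₂
  simp only [mul_one, mul_div_cancel₀ _ h₂.ne'] at h
  rw [← h]
  field_simp

theorem isHomogeneousNegTwo_of_eq_profile {f : ℝ × ℝ × ℝ → ℝ} {h : ℝ × ℝ → ℝ}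
    (hf : ∀ θ : ℝ × ℝ × ℝ, 0 < θ.1 → 0 < θ.2.1 → f θ = h (θ.1 / θ.2.1, θ.2.2) / θ.1 ^ 2) :
    IsHomogeneousNegTwo f := by
  intro θ h₁ h₂ s hs
  rw [hf θ h₁ h₂, hf _ (by positivity) (by positivity), mul_div_mul_left _ _ hs.ne']
  field_simp

/-- Let `Ω = (0,∞) × (0,∞) × ℝ` and `π : Ω → (0,∞)` C¹.  Then `π`
satisfies `∂/∂θ₁{θ₁π} + ∂/∂θ₂{θ₂π} = 0` on `Ω` iff there exists
`h : (0,∞) × ℝ → (0,∞)` with `π(θ) = θ₁⁻²h(θ₁/θ₂, θ₃)` for all `θ ∈ Ω`. -/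
theorem stmt_16 (π : ℝ × ℝ × ℝ → ℝ)
    (hπC1 : ContDiffOn ℝ 1 π {θ : ℝ × ℝ × ℝ | 0 < θ.1 ∧ 0 < θ.2.1})
    (hπpos : ∀ θ : ℝ × ℝ × ℝ, 0 < θ.1 → 0 < θ.2.1 → 0 < π θ) :
    (∀ θ : ℝ × ℝ × ℝ, 0 < θ.1 → 0 < θ.2.1 →
        fderiv ℝ (fun θ' : ℝ × ℝ × ℝ => θ'.1 * π θ') θ (1, 0, 0)
          + fderiv ℝ (fun θ' : ℝ × ℝ × ℝ => θ'.2.1 * π θ') θ (0, 1, 0) = 0) ↔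
      ∃ h : ℝ × ℝ → ℝ, (∀ z : ℝ × ℝ, 0 < z.1 → 0 < h z) ∧
        ∀ θ : ℝ × ℝ × ℝ, 0 < θ.1 → 0 < θ.2.1 →
          π θ = h (θ.1 / θ.2.1, θ.2.2) / θ.1 ^ 2 := by
  have hopen : IsOpen {θ : ℝ × ℝ × ℝ | 0 < θ.1 ∧ 0 < θ.2.1} :=
    (isOpen_lt continuous_const continuous_fst).inter
      (isOpen_lt continuous_const continuous_snd.fst)
  have hdiff : ∀ θ : ℝ × ℝ × ℝ, 0 < θ.1 → 0 < θ.2.1 → DifferentiableAt ℝ π θ :=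
    fun θ h₁ h₂ => (hπC1.contDiffAt (hopen.mem_nhds ⟨h₁, h₂⟩)).differentiableAt one_ne_zero
  have hpde : ∀ θ : ℝ × ℝ × ℝ, 0 < θ.1 → 0 < θ.2.1 →
      fderiv ℝ (fun θ' : ℝ × ℝ × ℝ => θ'.1 * π θ') θ (1, 0, 0)
          + fderiv ℝ (fun θ' : ℝ × ℝ × ℝ => θ'.2.1 * π θ') θ (0, 1, 0)
        = fderiv ℝ π θ (θ.1, θ.2.1, 0) + 2 * π θ := fun θ h₁ h₂ =>
    fderiv_fst_mul_add_fderiv_snd_mul (hdiff θ h₁ h₂)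
  simp +contextual only [hpde]
  rw [euler_pde_iff_isHomogeneousNegTwo hdiff]
  constructor
  · intro hhom
    refine ⟨fun z => z.1 ^ 2 * π (z.1, 1, z.2), fun z hz => ?_, hhom.eq_profile⟩
    exact mul_pos (pow_pos hz 2) (hπpos _ hz one_pos)
  · rintro ⟨h, -, hrep⟩
    exact isHomogeneousNegTwo_of_eq_profile hrep
end
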